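/- arXiv:2012.00975 — 10 statements merged into one kernel-verified Lean document; each statement's English description precedes it below -/
import Mathlib

section
/- Let γ ∈ [0,1) and α ∈ (γ/2 − 1/2, γ/2 + 1/2). Then both integrals I₁ := ∫₀¹ (1−v)^{2α} v^{−γ} dv and I₂ := ∫₀^∞ ((1+v)^α − v^α)² v^{−γ} dv are finite, and I₁ = Beta(1−γ, 2α+1). In particular the normalizing constant c(α,γ) := (I₁ + I₂)^{−1/2} of the generalized fractional Brownian motion is a well-defined positive real number. -/
open MeasureTheory Real Set Filter

/-- The Beta function `Beta a b = ∫₀¹ x^(a-1) (1-x)^(b-1) dx`. -/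
noncomputable def Beta (a b : ℝ) : ℝ :=
  ∫ x in Set.Ioo (0:ℝ) 1, x ^ (a - 1) * (1 - x) ^ (b - 1)

/-- Squaring an `rpow` of a positive base doubles the exponent. -/
lemma rpow_sq_eq (α : ℝ) {x : ℝ} (hx : 0 < x) : (x ^ α) ^ 2 = x ^ (2 * α) := by
  rw [sq, ← Real.rpow_add hx, two_mul]

/-- Mean value theorem bound: for `v ≥ 1` and `α < 1`,
`|(1+v)^α - v^α| ≤ |α| * v^(α-1)`. -/
lemma mvt_bound (α : ℝ) (hα : α < 1) {v : ℝ} (hv : 1 ≤ v) :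
    |(1 + v) ^ α - v ^ α| ≤ |α| * v ^ (α - 1) := by
  have hv0 : (0:ℝ) < v := lt_of_lt_of_le one_pos hv
  have hlt : v < v + 1 := by linarith
  have hcont : ContinuousOn (fun x : ℝ => x ^ α) (Set.Icc v (v + 1)) :=
    continuousOn_id.rpow_const fun x hx =>
      Or.inl (ne_of_gt (lt_of_lt_of_le hv0 hx.1))
  have hderiv : ∀ x ∈ Set.Ioo v (v + 1),
      HasDerivAt (fun x : ℝ => x ^ α) (α * x ^ (α - 1)) x := fun x hx =>
    Real.hasDerivAt_rpow_const (Or.inl (ne_of_gt (hv0.trans hx.1)))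
  obtain ⟨c, hc, hc'⟩ := exists_hasDerivAt_eq_slope (fun x : ℝ => x ^ α)
    (fun x : ℝ => α * x ^ (α - 1)) hlt hcont hderiv
  have hs : v + 1 - v = 1 := by ring
  rw [hs, div_one] at hc'
  have h1v : (1 + v : ℝ) = v + 1 := by ring
  rw [h1v, ← hc', abs_mul, abs_of_nonneg (Real.rpow_nonneg (hv0.trans hc.1).le _)]
  exact mul_le_mul_of_nonneg_left
    (Real.rpow_le_rpow_of_nonpos hv0 hc.1.le (by linarith)) (abs_nonneg α)

/-- finiteness of the two normalizing integrals of the GFBM, the Beta-function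
value of the first one, and well-definedness/positivity of the normalizing constant
`c(α,γ) = (I₁ + I₂)^(-1/2)`. -/
theorem stmt0 (γ α : ℝ) (hγ0 : 0 ≤ γ) (hγ1 : γ < 1)
    (hα1 : γ/2 - 1/2 < α) (hα2 : α < γ/2 + 1/2) :
    IntegrableOn (fun v : ℝ => (1 - v) ^ (2*α) * v ^ (-γ)) (Set.Ioo 0 1) volume ∧
    IntegrableOn (fun v : ℝ => ((1 + v) ^ α - v ^ α)^2 * v ^ (-γ)) (Set.Ioi 0) volume ∧
    (∫ v in Set.Ioo (0:ℝ) 1, (1 - v) ^ (2*α) * v ^ (-γ)) = Beta (1 - γ) (2*α + 1) ∧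
    0 < (∫ v in Set.Ioo (0:ℝ) 1, (1 - v) ^ (2*α) * v ^ (-γ)) +
          (∫ v in Set.Ioi (0:ℝ), ((1 + v) ^ α - v ^ α)^2 * v ^ (-γ)) ∧
    0 < ((∫ v in Set.Ioo (0:ℝ) 1, (1 - v) ^ (2*α) * v ^ (-γ)) +
          (∫ v in Set.Ioi (0:ℝ), ((1 + v) ^ α - v ^ α)^2 * v ^ (-γ))) ^ (-(1:ℝ)/2) := by
  have h2a : (-1:ℝ) < 2 * α := by linarith
  have hg : (-1:ℝ) < -γ := by linarith
  have hag : (-1:ℝ) < 2 * α - γ := by linarith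
  have htail : 2 * α - 2 - γ < -1 := by linarith
  have hα' : α < 1 := by linarith
  -- measurability of the first integrand
  have m1 : AEStronglyMeasurable (fun v : ℝ => (1 - v) ^ (2*α) * v ^ (-γ))
      (volume.restrict (Ioo 0 1)) := by
    refine ContinuousOn.aestronglyMeasurable ?_ measurableSet_Ioo
    refine ContinuousOn.mul ?_ ?_
    · exact (continuousOn_const.sub continuousOn_id).rpow_const
        fun x hx => Or.inl (by have := hx.2; intro h; simp only [Pi.sub_apply, id] at h; linarith [sub_eq_zero.mp h])
    · exact continuousOn_id.rpow_const fun x hx => Or.inl (ne_of_gt hx.1)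
  -- integrability of I₁
  have hint_pow : IntegrableOn (fun v : ℝ => (1 - v) ^ (2*α)) (Ioo 0 1) volume := by
    have h := (intervalIntegral.intervalIntegrable_rpow' (a := 0) (b := 1) h2a).comp_sub_left 1
    simp only [sub_zero, sub_self] at h
    replace h := h.symm
    rwa [intervalIntegrable_iff_integrableOn_Ioo_of_le zero_le_one] at h
  have hint_gam : IntegrableOn (fun v : ℝ => v ^ (-γ)) (Ioo 0 1) volume :=
    (intervalIntegral.integrableOn_Ioo_rpow_iff one_pos).mpr hg
  set C : ℝ := max 1 ((2:ℝ) ^ (-(2*α))) + (2:ℝ) ^ γ with hC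
  have hCpos : 0 < C := by
    have : (0:ℝ) < (2:ℝ) ^ γ := Real.rpow_pos_of_pos two_pos γ
    have : (0:ℝ) < max 1 ((2:ℝ) ^ (-(2*α))) := lt_max_of_lt_left one_pos
    positivity
  have hI1 : IntegrableOn (fun v : ℝ => (1 - v) ^ (2*α) * v ^ (-γ)) (Ioo 0 1) volume := by
    refine Integrable.mono' (((hint_pow.add hint_gam).const_mul C)) m1 ?_
    filter_upwards [ae_restrict_mem measurableSet_Ioo] with v hv
    have hv0 : (0:ℝ) < v := hv.1
    have hv1 : v < 1 := hv.2
    have h1v : (0:ℝ) < 1 - v := by linarith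
    have hnn : (0:ℝ) ≤ (1 - v) ^ (2*α) * v ^ (-γ) :=
      mul_nonneg (Real.rpow_nonneg h1v.le _) (Real.rpow_nonneg hv0.le _)
    rw [Real.norm_eq_abs, abs_of_nonneg hnn]
    have hp1 : (0:ℝ) ≤ (1 - v) ^ (2*α) := Real.rpow_nonneg h1v.le _
    have hp2 : (0:ℝ) ≤ v ^ (-γ) := Real.rpow_nonneg hv0.le _
    rcases le_or_gt v (1/2) with hv2 | hv2
    · -- near 0 : bound (1-v)^(2α) by a constant
      have hb : (1 - v) ^ (2*α) ≤ max 1 ((2:ℝ) ^ (-(2*α))) := by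
        rcases le_or_gt 0 (2*α) with h | h
        · exact le_trans (Real.rpow_le_one h1v.le (by linarith) h) (le_max_left _ _)
        · refine le_trans ?_ (le_max_right _ _)
          have : ((1:ℝ)/2) ^ (2*α) = (2:ℝ) ^ (-(2*α)) := by
            rw [one_div, Real.inv_rpow (by norm_num : (0:ℝ) ≤ 2), ← Real.rpow_neg (by norm_num)]
          rw [← this]
          exact Real.rpow_le_rpow_of_nonpos (by norm_num) (by linarith) h.le
      have hCb : max 1 ((2:ℝ) ^ (-(2*α))) ≤ C := by
        have : (0:ℝ) < (2:ℝ) ^ γ := Real.rpow_pos_of_pos two_pos γ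
        simp only [hC]; linarith
      calc (1 - v) ^ (2*α) * v ^ (-γ) ≤ C * v ^ (-γ) :=
            mul_le_mul_of_nonneg_right (hb.trans hCb) hp2
        _ ≤ C * ((1 - v) ^ (2*α) + v ^ (-γ)) := by nlinarith
    · -- near 1 : bound v^(-γ) by a constant
      have hb : v ^ (-γ) ≤ (2:ℝ) ^ γ := by
        have : ((1:ℝ)/2) ^ (-γ) = (2:ℝ) ^ γ := by
          rw [one_div, Real.inv_rpow (by norm_num : (0:ℝ) ≤ 2), ← Real.rpow_neg (by norm_num),
            neg_neg]
        rw [← this]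
        exact Real.rpow_le_rpow_of_nonpos (by norm_num) (by linarith) (by linarith)
      have hCb : (2:ℝ) ^ γ ≤ C := by
        have : (0:ℝ) < max 1 ((2:ℝ) ^ (-(2*α))) := lt_max_of_lt_left one_pos
        simp only [hC]; linarith
      calc (1 - v) ^ (2*α) * v ^ (-γ) = v ^ (-γ) * (1 - v) ^ (2*α) := mul_comm _ _
        _ ≤ C * (1 - v) ^ (2*α) := mul_le_mul_of_nonneg_right (hb.trans hCb) hp1
        _ ≤ C * ((1 - v) ^ (2*α) + v ^ (-γ)) := by nlinarith
  -- integrability of I₂ near 0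
  have m2a : AEStronglyMeasurable (fun v : ℝ => ((1 + v) ^ α - v ^ α)^2 * v ^ (-γ))
      (volume.restrict (Ioo 0 1)) := by
    refine ContinuousOn.aestronglyMeasurable ?_ measurableSet_Ioo
    refine ContinuousOn.mul (ContinuousOn.pow ?_ 2)
      (continuousOn_id.rpow_const fun x hx => Or.inl (ne_of_gt hx.1))
    exact ((continuousOn_const.add continuousOn_id).rpow_const
        fun x hx => Or.inl (by have := hx.1; intro h; simp only [Pi.add_apply, id] at h; linarith)).sub
      (continuousOn_id.rpow_const fun x hx => Or.inl (ne_of_gt hx.1))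
  set C3 : ℝ := max 1 ((2:ℝ) ^ (2*α)) with hC3
  have hC3nn : 0 ≤ C3 := le_trans zero_le_one (le_max_left _ _)
  have h2near : IntegrableOn (fun v : ℝ => ((1 + v) ^ α - v ^ α)^2 * v ^ (-γ))
      (Ioo 0 1) volume := by
    have hgint : IntegrableOn
        (fun v : ℝ => 2 * C3 * v ^ (-γ) + 2 * v ^ (2*α - γ)) (Ioo 0 1) volume :=
      (hint_gam.const_mul (2 * C3)).add
        (((intervalIntegral.integrableOn_Ioo_rpow_iff one_pos).mpr hag).const_mul 2)
    refine Integrable.mono' hgint m2a ?_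
    filter_upwards [ae_restrict_mem measurableSet_Ioo] with v hv
    have hv0 : (0:ℝ) < v := hv.1
    have hv1 : v < 1 := hv.2
    have h1v : (0:ℝ) < 1 + v := by linarith
    have hp2 : (0:ℝ) ≤ v ^ (-γ) := Real.rpow_nonneg hv0.le _
    have hnn : (0:ℝ) ≤ ((1 + v) ^ α - v ^ α)^2 * v ^ (-γ) :=
      mul_nonneg (sq_nonneg _) hp2
    rw [Real.norm_eq_abs, abs_of_nonneg hnn]
    have hsq : ((1 + v) ^ α - v ^ α)^2 ≤ 2 * (1 + v) ^ (2*α) + 2 * v ^ (2*α) := by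
      have e1 := rpow_sq_eq α h1v
      have e2 := rpow_sq_eq α hv0
      nlinarith [sq_nonneg ((1 + v) ^ α + v ^ α)]
    have hb : (1 + v) ^ (2*α) ≤ C3 := by
      rcases le_or_gt 0 (2*α) with h | h
      · exact le_trans (Real.rpow_le_rpow h1v.le (by linarith) h) (le_max_right _ _)
      · exact le_trans (Real.rpow_le_one_of_one_le_of_nonpos (by linarith) h.le)
          (le_max_left _ _)
    have key : ((1 + v) ^ α - v ^ α)^2 * v ^ (-γ) ≤
        (2 * C3 + 2 * v ^ (2*α)) * v ^ (-γ) := by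
      refine mul_le_mul_of_nonneg_right ?_ hp2
      calc ((1 + v) ^ α - v ^ α)^2 ≤ 2 * (1 + v) ^ (2*α) + 2 * v ^ (2*α) := hsq
        _ ≤ 2 * C3 + 2 * v ^ (2*α) := by nlinarith
    refine key.trans (le_of_eq ?_)
    rw [add_mul, mul_assoc 2 (v ^ (2*α)) _, ← Real.rpow_add hv0]
    ring_nf
  -- integrability of I₂ on the tail
  have h2tail : IntegrableOn (fun v : ℝ => ((1 + v) ^ α - v ^ α)^2 * v ^ (-γ))
      (Ici 1) volume := by
    have m2b : AEStronglyMeasurable (fun v : ℝ => ((1 + v) ^ α - v ^ α)^2 * v ^ (-γ))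
        (volume.restrict (Ici 1)) := by
      refine ContinuousOn.aestronglyMeasurable ?_ measurableSet_Ici
      refine ContinuousOn.mul (ContinuousOn.pow ?_ 2)
        (continuousOn_id.rpow_const fun x hx =>
          Or.inl (by simp only [id]; intro h; rw [h] at hx; exact absurd hx (by norm_num)))
      exact ((continuousOn_const.add continuousOn_id).rpow_const
          fun x hx => Or.inl (by have : (1:ℝ) ≤ x := hx; intro h; simp only [Pi.add_apply, id] at h; linarith)).sub
        (continuousOn_id.rpow_const fun x hx =>
          Or.inl (by simp only [id]; intro h; rw [h] at hx; exact absurd hx (by norm_num)))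
    have hgint : IntegrableOn (fun v : ℝ => α^2 * v ^ (2*α - 2 - γ)) (Ici 1) volume := by
      rw [integrableOn_Ici_iff_integrableOn_Ioi]
      exact (integrableOn_Ioi_rpow_of_lt htail one_pos).const_mul _
    refine Integrable.mono' hgint m2b ?_
    filter_upwards [ae_restrict_mem measurableSet_Ici] with v hv
    have hv1 : (1:ℝ) ≤ v := hv
    have hv0 : (0:ℝ) < v := lt_of_lt_of_le one_pos hv1
    have hp2 : (0:ℝ) ≤ v ^ (-γ) := Real.rpow_nonneg hv0.le _
    have hnn : (0:ℝ) ≤ ((1 + v) ^ α - v ^ α)^2 * v ^ (-γ) :=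
      mul_nonneg (sq_nonneg _) hp2
    rw [Real.norm_eq_abs, abs_of_nonneg hnn]
    have hmvt := mvt_bound α hα' hv1
    have hsq : ((1 + v) ^ α - v ^ α)^2 ≤ α^2 * v ^ (2*α - 2) := by
      have h1 : ((1 + v) ^ α - v ^ α)^2 = |(1 + v) ^ α - v ^ α|^2 := (sq_abs _).symm
      have h2 : (|α| * v ^ (α - 1))^2 = α^2 * v ^ (2*α - 2) := by
        rw [mul_pow, sq_abs, rpow_sq_eq (α - 1) hv0]
        ring_nf
      rw [h1, ← h2]
      exact pow_le_pow_left₀ (abs_nonneg _) hmvt 2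
    calc ((1 + v) ^ α - v ^ α)^2 * v ^ (-γ) ≤ (α^2 * v ^ (2*α - 2)) * v ^ (-γ) :=
          mul_le_mul_of_nonneg_right hsq hp2
      _ = α^2 * v ^ (2*α - 2 - γ) := by
          rw [mul_assoc, ← Real.rpow_add hv0]; ring_nf
  have hI2 : IntegrableOn (fun v : ℝ => ((1 + v) ^ α - v ^ α)^2 * v ^ (-γ))
      (Ioi 0) volume := by
    rw [← Ioo_union_Ici_eq_Ioi (zero_lt_one)]
    exact h2near.union h2tail
  -- the Beta identity
  have heq : (∫ v in Set.Ioo (0:ℝ) 1, (1 - v) ^ (2*α) * v ^ (-γ)) = Beta (1 - γ) (2*α + 1) := by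
    rw [Beta, show (1:ℝ) - γ - 1 = -γ by ring, show 2*α + 1 - 1 = 2*α by ring]
    exact integral_congr_ae (Eventually.of_forall fun x => mul_comm _ _)
  -- positivity
  have hI1pos : 0 < ∫ v in Set.Ioo (0:ℝ) 1, (1 - v) ^ (2*α) * v ^ (-γ) := by
    refine (setIntegral_pos_iff_support_of_nonneg_ae ?_ hI1).mpr ?_
    · filter_upwards [ae_restrict_mem measurableSet_Ioo] with v hv
      exact mul_nonneg (Real.rpow_nonneg (by linarith [hv.2]) _)
        (Real.rpow_nonneg hv.1.le _)
    · have hsub : Ioo (0:ℝ) 1 ⊆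
          Function.support (fun v : ℝ => (1 - v) ^ (2*α) * v ^ (-γ)) ∩ Ioo 0 1 := by
        intro v hv
        refine ⟨ne_of_gt (mul_pos (Real.rpow_pos_of_pos (by linarith [hv.2]) _)
          (Real.rpow_pos_of_pos hv.1 _)), hv⟩
      calc (0:ENNReal) < volume (Ioo (0:ℝ) 1) := by rw [Real.volume_Ioo]; norm_num
        _ ≤ _ := measure_mono hsub
  have hI2nn : 0 ≤ ∫ v in Set.Ioi (0:ℝ), ((1 + v) ^ α - v ^ α)^2 * v ^ (-γ) :=
    setIntegral_nonneg measurableSet_Ioi fun v hv =>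
      mul_nonneg (sq_nonneg _) (Real.rpow_nonneg (le_of_lt hv) _)
  have hsum : 0 < (∫ v in Set.Ioo (0:ℝ) 1, (1 - v) ^ (2*α) * v ^ (-γ)) +
      (∫ v in Set.Ioi (0:ℝ), ((1 + v) ^ α - v ^ α)^2 * v ^ (-γ)) := by linarith
  exact ⟨hI1, hI2, heq, hsum, Real.rpow_pos_of_pos hsum _⟩
end

section
/- Let γ ∈ (0,1), t > 0, and α ∈ ℝ. The function s ↦ (t−s)^{α−1} |s|^{−γ/2} for s < t (and 0 for s ≥ t) belongs to L²(ℝ, Lebesgue) if and only if 1/2 < α < (1+γ)/2. Moreover, when 1/2 < α < (1+γ)/2, its squared L² norm equals ∫_{−∞}^t (t−s)^{2(α−1)} |s|^{−γ} ds = t^{2α−γ−1} ( Beta(1−γ, 2α−1) + Beta(1−γ, 1+γ−2α) ). -/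
open MeasureTheory Real Set Filter

-- measurability of beta-type integrand
/-- Integrability near 0: `x^(a-1) (1-x)^(b-1)` on `(0,1/2)` iff `0 < a`. -/
lemma half_iff (a b : ℝ) :
    IntegrableOn (fun x : ℝ => x ^ (a-1) * (1-x) ^ (b-1)) (Ioo 0 (1/2:ℝ)) ↔ 0 < a := by
  set m : ℝ := min ((1/2:ℝ) ^ (b-1)) 1 with hm
  set M : ℝ := max ((1/2:ℝ) ^ (b-1)) 1 with hM
  have hm0 : 0 < m := lt_min (rpow_pos_of_pos (by norm_num) _) one_pos
  have hbound : ∀ x ∈ Ioo (0:ℝ) (1/2), m ≤ (1-x) ^ (b-1) ∧ (1-x) ^ (b-1) ≤ M := by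
    intro x hx
    have h1 : (1/2:ℝ) ≤ 1 - x := by linarith [hx.2]
    have h2 : 1 - x ≤ 1 := by linarith [hx.1]
    rcases le_or_gt 0 (b-1) with hb | hb
    · constructor
      · exact le_trans (min_le_left _ _) (rpow_le_rpow (by norm_num) h1 hb)
      · calc (1-x)^(b-1) ≤ (1:ℝ)^(b-1) := rpow_le_rpow (by linarith) h2 hb
          _ = 1 := one_rpow _
          _ ≤ M := le_max_right _ _
    · constructor
      · calc m ≤ 1 := min_le_right _ _
          _ = (1:ℝ)^(b-1) := (one_rpow _).symm
          _ ≤ (1-x)^(b-1) := rpow_le_rpow_of_nonpos (by linarith) h2 hb.le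
      · exact le_trans (rpow_le_rpow_of_nonpos (by norm_num) h1 hb.le) (le_max_left _ _)
  have hmeas : AEStronglyMeasurable (fun x : ℝ => x ^ (a-1) * (1-x) ^ (b-1))
      (volume.restrict (Ioo 0 (1/2:ℝ))) :=
    ((measurable_id.pow measurable_const).mul
      ((measurable_const.sub measurable_id).pow measurable_const)).aestronglyMeasurable
  constructor
  · intro h
    have : IntegrableOn (fun x : ℝ => x ^ (a-1)) (Ioo 0 (1/2:ℝ)) := by
      refine Integrable.mono (h.const_mul m⁻¹)
        ((measurable_id.pow measurable_const).aestronglyMeasurable) ?_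
      filter_upwards [ae_restrict_mem measurableSet_Ioo] with x hx
      have hx0 : (0:ℝ) < x := hx.1
      have hxp : (0:ℝ) ≤ x ^ (a-1) := rpow_nonneg hx0.le _
      have h1x : (0:ℝ) ≤ (1-x)^(b-1) := rpow_nonneg (by linarith [hx.2] : (0:ℝ) ≤ 1-x) _
      rw [Real.norm_of_nonneg hxp, Real.norm_of_nonneg (by positivity)]
      calc x ^ (a-1) = m⁻¹ * (m * x^(a-1)) := by field_simp
        _ ≤ m⁻¹ * (x^(a-1) * (1-x)^(b-1)) := by
            apply mul_le_mul_of_nonneg_left _ (by positivity)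
            calc m * x^(a-1) ≤ (1-x)^(b-1) * x^(a-1) :=
                  mul_le_mul_of_nonneg_right (hbound x hx).1 hxp
              _ = x^(a-1) * (1-x)^(b-1) := mul_comm _ _
    have := (intervalIntegral.integrableOn_Ioo_rpow_iff (by norm_num : (0:ℝ) < 1/2)).1 this
    linarith
  · intro ha
    have hint : IntegrableOn (fun x : ℝ => M * x ^ (a-1)) (Ioo 0 (1/2:ℝ)) :=
      ((intervalIntegral.integrableOn_Ioo_rpow_iff (by norm_num : (0:ℝ) < 1/2)).2 (by linarith)).const_mul M
    refine Integrable.mono hint hmeas ?_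
    filter_upwards [ae_restrict_mem measurableSet_Ioo] with x hx
    have hx0 : (0:ℝ) < x := hx.1
    have hxp : (0:ℝ) ≤ x ^ (a-1) := rpow_nonneg hx0.le _
    have h1x : (0:ℝ) ≤ (1-x)^(b-1) := rpow_nonneg (by linarith [hx.2] : (0:ℝ) ≤ 1-x) _
    rw [Real.norm_of_nonneg (by positivity), Real.norm_of_nonneg (by positivity)]
    calc x^(a-1) * (1-x)^(b-1) ≤ x^(a-1) * M := mul_le_mul_of_nonneg_left (hbound x hx).2 hxp
      _ = M * x^(a-1) := mul_comm _ _

lemma upper_iff (a b : ℝ) :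
    IntegrableOn (fun x : ℝ => x ^ (a-1) * (1-x) ^ (b-1)) (Ioo (1/2:ℝ) 1) ↔ 0 < b := by
  have himg : (fun x : ℝ => 1 - x) '' Ioo 0 (1/2:ℝ) = Ioo (1/2:ℝ) 1 := by
    rw [Set.image_const_sub_Ioo]; norm_num
  rw [← himg, integrableOn_image_iff_integrableOn_abs_deriv_smul measurableSet_Ioo
    (fun x _ => by simpa using (hasDerivWithinAt_id x (Ioo (0:ℝ) (1/2:ℝ))).const_sub 1 :
      ∀ x ∈ Ioo (0:ℝ) (1/2:ℝ), HasDerivWithinAt (fun y : ℝ => 1 - y) (-1) (Ioo (0:ℝ) (1/2:ℝ)) x)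
    (fun x _ y _ h => by simp only [sub_right_inj] at h; exact h) _]
  have : EqOn (fun x : ℝ => |(-1:ℝ)| • ((1-x) ^ (a-1) * (1-(1-x)) ^ (b-1)))
      (fun x : ℝ => x ^ (b-1) * (1-x) ^ (a-1)) (Ioo 0 (1/2:ℝ)) := by
    intro x _
    simp only [abs_neg, abs_one, one_smul, smul_eq_mul, sub_sub_cancel]
    ring_nf
  rw [integrableOn_congr_fun this measurableSet_Ioo]
  exact half_iff b a

lemma beta_integrable_iff (a b : ℝ) :
    IntegrableOn (fun x : ℝ => x ^ (a-1) * (1-x) ^ (b-1)) (Ioo (0:ℝ) 1) ↔ 0 < a ∧ 0 < b := by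
  constructor
  · intro h
    exact ⟨(half_iff a b).1 (h.mono_set (Ioo_subset_Ioo le_rfl (by norm_num))),
      (upper_iff a b).1 (h.mono_set (Ioo_subset_Ioo (by norm_num) le_rfl))⟩
  · rintro ⟨ha, hb⟩
    have hsplit : Ioo (0:ℝ) 1 = Ioo 0 (1/2:ℝ) ∪ Ico (1/2:ℝ) 1 := by
      ext x
      simp only [mem_Ioo, mem_union, mem_Ico]
      constructor
      · rintro ⟨h1, h2⟩; rcases lt_or_ge x (1/2) with h | h
        · exact Or.inl ⟨h1, h⟩
        · exact Or.inr ⟨h, h2⟩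
      · rintro (⟨h1, h2⟩ | ⟨h1, h2⟩) <;> constructor <;> try linarith
    rw [hsplit]
    exact ((half_iff a b).2 ha).union
      ((integrableOn_Ico_iff_integrableOn_Ioo).2 ((upper_iff a b).2 hb))

lemma keyA {γ α t : ℝ} (ht : 0 < t) {x : ℝ} (hx : x ∈ Ioo (0:ℝ) 1) :
    |t| • ((t - t*x)^(2*(α-1)) * |t*x|^(-γ)) =
      t^(2*α-γ-1) * (x ^ (1-γ-1) * (1-x) ^ (2*α-1-1)) := by
  have hx0 : 0 < x := hx.1
  have hu : 0 < 1 - x := by linarith [hx.2]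
  have e1 : t - t*x = t*(1-x) := by ring
  rw [smul_eq_mul, abs_of_pos ht, abs_of_pos (by positivity : (0:ℝ) < t*x), e1,
    mul_rpow ht.le hu.le, mul_rpow ht.le hx0.le,
    show (2*α-γ-1 : ℝ) = 1 + 2*(α-1) + -γ by ring, rpow_add ht, rpow_add ht, rpow_one,
    show (1-γ-1 : ℝ) = -γ by ring, show (2*α-1-1 : ℝ) = 2*(α-1) by ring]
  ring

lemma keyB {γ α t : ℝ} (ht : 0 < t) {x : ℝ} (hx : x ∈ Ioo (0:ℝ) 1) :
    |(-(t/(1-x)^2))| • ((t - (-(t*x/(1-x))))^(2*(α-1)) * |(-(t*x/(1-x)))|^(-γ)) =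
      t^(2*α-γ-1) * (x ^ (1-γ-1) * (1-x) ^ (1+γ-2*α-1)) := by
  have hx0 : 0 < x := hx.1
  have hu : 0 < 1 - x := by linarith [hx.2]
  have e1 : t - (-(t*x/(1-x))) = t/(1-x) := by field_simp; ring
  have e2 : |(-(t*x/(1-x)))| = t*x/(1-x) := by
    rw [abs_neg, abs_of_pos (by positivity)]
  have e3 : |(-(t/(1-x)^2))| = t/(1-x)^2 := by
    rw [abs_neg, abs_of_pos (by positivity)]
  rw [smul_eq_mul, e1, e2, e3]
  have r1 : (t/(1-x))^(2*(α-1)) = t^(2*(α-1)) * (1-x)^(-(2*(α-1))) := by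
    rw [div_rpow ht.le hu.le, rpow_neg hu.le, div_eq_mul_inv]
  have r2 : (t*x/(1-x))^(-γ) = t^(-γ) * x^(-γ) * (1-x)^γ := by
    rw [div_rpow (by positivity) hu.le, mul_rpow ht.le hx0.le, rpow_neg hu.le γ]
    rw [div_inv_eq_mul]
  have r3 : t/(1-x)^2 = t * (1-x)^(-(2:ℝ)) := by
    rw [rpow_neg hu.le, ← rpow_natCast (1-x) 2]
    norm_num
    rw [div_eq_mul_inv]
  rw [r1, r2, r3,
    show (2*α-γ-1 : ℝ) = 1 + 2*(α-1) + -γ by ring, rpow_add ht, rpow_add ht, rpow_one,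
    show (1-γ-1 : ℝ) = -γ by ring,
    show (1+γ-2*α-1 : ℝ) = -2 + -(2*(α-1)) + γ by ring, rpow_add hu, rpow_add hu]
  ring

lemma imageA {t : ℝ} (ht : 0 < t) : (fun x : ℝ => t*x) '' Ioo 0 1 = Ioo 0 t := by
  ext s
  constructor
  · rintro ⟨x, hx, rfl⟩
    have hx0 : 0 < x := hx.1
    have hx1 : x < 1 := hx.2
    constructor
    · show (0:ℝ) < t*x; positivity
    · show t*x < t; nlinarith
  · rintro ⟨h1, h2⟩
    exact ⟨s/t, ⟨by positivity, by rw [div_lt_one ht]; exact h2⟩, by field_simp⟩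

lemma imageB {t : ℝ} (ht : 0 < t) : (fun x : ℝ => -(t*x/(1-x))) '' Ioo 0 1 = Iio 0 := by
  ext s
  constructor
  · rintro ⟨x, hx, rfl⟩
    have hx0 : 0 < x := hx.1
    have hu : 0 < 1 - x := by linarith [hx.2]
    have : 0 < t*x/(1-x) := by positivity
    simpa using this
  · intro hs
    have hs0 : s < 0 := hs
    have hts : 0 < t - s := by linarith
    have hs' : 0 < -s := by linarith
    refine ⟨-s/(t-s), ⟨by positivity, ?_⟩, ?_⟩
    · rw [div_lt_one hts]; linarith
    · show -(t * (-s/(t-s)) / (1 - -s/(t-s))) = s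
      have h1 : 1 - -s/(t-s) = t/(t-s) := by field_simp; ring
      rw [h1]
      field_simp

lemma substA {γ α t : ℝ} (ht : 0 < t) :
    (IntegrableOn (fun s : ℝ => (t-s)^(2*(α-1)) * |s|^(-γ)) (Ioo 0 t) ↔
      IntegrableOn (fun x : ℝ => x ^ (1-γ-1) * (1-x) ^ (2*α-1-1)) (Ioo (0:ℝ) 1)) ∧
    (∫ s in Ioo 0 t, (t-s)^(2*(α-1)) * |s|^(-γ)) = t^(2*α-γ-1) * Beta (1-γ) (2*α-1) := by
  have hderiv : ∀ x ∈ Ioo (0:ℝ) 1, HasDerivWithinAt (fun x : ℝ => t*x) t (Ioo (0:ℝ) 1) x :=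
    fun x _ => by simpa using (hasDerivWithinAt_id x (Ioo (0:ℝ) 1)).const_mul t
  have hinj : InjOn (fun x : ℝ => t*x) (Ioo 0 1) :=
    fun x _ y _ h => mul_left_cancel₀ (ne_of_gt ht) h
  have heq : EqOn (fun x : ℝ => |t| • ((t - t*x)^(2*(α-1)) * |t*x|^(-γ)))
      (fun x : ℝ => t^(2*α-γ-1) * (x ^ (1-γ-1) * (1-x) ^ (2*α-1-1))) (Ioo 0 1) :=
    fun x hx => keyA ht hx
  constructor
  · rw [← imageA ht,
      integrableOn_image_iff_integrableOn_abs_deriv_smul measurableSet_Ioo hderiv hinj,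
      integrableOn_congr_fun heq measurableSet_Ioo]
    exact integrable_const_mul_iff
      (isUnit_iff_ne_zero.2 (ne_of_gt (rpow_pos_of_pos ht _))) _
  · rw [← imageA ht,
      integral_image_eq_integral_abs_deriv_smul measurableSet_Ioo hderiv hinj,
      setIntegral_congr_fun measurableSet_Ioo heq, integral_const_mul]
    rfl

lemma substB {γ α t : ℝ} (ht : 0 < t) :
    (IntegrableOn (fun s : ℝ => (t-s)^(2*(α-1)) * |s|^(-γ)) (Iio 0) ↔
      IntegrableOn (fun x : ℝ => x ^ (1-γ-1) * (1-x) ^ (1+γ-2*α-1)) (Ioo (0:ℝ) 1)) ∧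
    (∫ s in Iio 0, (t-s)^(2*(α-1)) * |s|^(-γ)) = t^(2*α-γ-1) * Beta (1-γ) (1+γ-2*α) := by
  have hderiv : ∀ x ∈ Ioo (0:ℝ) 1, HasDerivWithinAt (fun x : ℝ => -(t*x/(1-x)))
      (-(t/(1-x)^2)) (Ioo (0:ℝ) 1) x := by
    intro x hx
    have hu : 1 - x ≠ 0 := by have := hx.2; intro h; simp only [sub_eq_zero] at h; linarith
    have h1 : HasDerivAt (fun y : ℝ => t*y) t x := by simpa using (hasDerivAt_id x).const_mul t
    have h2 : HasDerivAt (fun y : ℝ => 1-y) (-1) x := by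
      simpa using (hasDerivAt_id x).const_sub 1
    have h3 := (h1.div h2 hu).neg
    have e : -((t * (1 - x) - t * x * -1) / (1 - x) ^ 2) = -(t / (1 - x) ^ 2) := by ring
    rw [e] at h3
    exact h3.hasDerivWithinAt
  have hinj : InjOn (fun x : ℝ => -(t*x/(1-x))) (Ioo 0 1) := by
    intro x hx y hy h
    have hux : (0:ℝ) < 1 - x := by linarith [hx.2]
    have huy : (0:ℝ) < 1 - y := by linarith [hy.2]
    simp only [neg_inj] at h
    rw [div_eq_div_iff (ne_of_gt hux) (ne_of_gt huy)] at h
    have : t * x = t * y := by nlinarith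
    exact mul_left_cancel₀ (ne_of_gt ht) this
  have heq : EqOn
      (fun x : ℝ => |(-(t/(1-x)^2))| • ((t - (-(t*x/(1-x))))^(2*(α-1)) * |(-(t*x/(1-x)))|^(-γ)))
      (fun x : ℝ => t^(2*α-γ-1) * (x ^ (1-γ-1) * (1-x) ^ (1+γ-2*α-1))) (Ioo 0 1) :=
    fun x hx => keyB ht hx
  constructor
  · rw [← imageB ht,
      integrableOn_image_iff_integrableOn_abs_deriv_smul measurableSet_Ioo hderiv hinj,
      integrableOn_congr_fun heq measurableSet_Ioo]
    exact integrable_const_mul_iff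
      (isUnit_iff_ne_zero.2 (ne_of_gt (rpow_pos_of_pos ht _))) _
  · rw [← imageB ht,
      integral_image_eq_integral_abs_deriv_smul measurableSet_Ioo hderiv hinj,
      setIntegral_congr_fun measurableSet_Ioo heq, integral_const_mul]
    rfl

/-- the kernel derivative `s ↦ (t-s)^(α-1) |s|^(-γ/2)` (for `s < t`, `0` else)
is square integrable iff `1/2 < α < (1+γ)/2`, and in that range the squared `L²` norm is the
stated Beta-function expression. -/
theorem stmt4 (γ α t : ℝ) (hγ0 : 0 < γ) (hγ1 : γ < 1) (ht : 0 < t) :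
    (MemLp (fun s : ℝ => if s < t then (t - s)^(α-1) * |s|^(-(γ/2)) else 0)
        2 volume ↔ (1/2 < α ∧ α < (1+γ)/2)) ∧
    ((1/2 < α ∧ α < (1+γ)/2) →
      (∫ s in Set.Iio t, (t - s)^(2*(α-1)) * |s|^(-γ)) =
        t^(2*α - γ - 1) * (Beta (1-γ) (2*α-1) + Beta (1-γ) (1+γ-2*α))) := by
  have hFmeas : AEStronglyMeasurable
      (fun s : ℝ => if s < t then (t - s)^(α-1) * |s|^(-(γ/2)) else 0) volume := by
    refine Measurable.aestronglyMeasurable ?_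
    exact Measurable.ite measurableSet_Iio
      (((measurable_const.sub measurable_id).pow measurable_const).mul
        (measurable_id.abs.pow measurable_const)) measurable_const
  have hsq : (fun s : ℝ => (if s < t then (t - s)^(α-1) * |s|^(-(γ/2)) else 0)^2)
      = (Iio t).indicator (fun s : ℝ => (t-s)^(2*(α-1)) * |s|^(-γ)) := by
    funext s
    rw [Set.indicator_apply]
    by_cases h : s < t
    · rw [if_pos h, if_pos (show s ∈ Iio t from h), mul_pow,
        ← rpow_natCast ((t-s)^(α-1)) 2, ← rpow_natCast (|s|^(-(γ/2))) 2,
        ← rpow_mul (by linarith : (0:ℝ) ≤ t - s), ← rpow_mul (abs_nonneg s)]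
      norm_num
      rw [show (α-1)*2 = 2*(α-1) by ring]
      exact Or.inl rfl
    · rw [if_neg h, if_neg (show s ∉ Iio t from h)]
      norm_num
  have hIoo := substA (γ:=γ) (α:=α) ht
  have hIio := substB (γ:=γ) (α:=α) ht
  have hIooIff : IntegrableOn (fun s : ℝ => (t-s)^(2*(α-1)) * |s|^(-γ)) (Ioo 0 t) ↔
      (0 < 1 - γ ∧ 0 < 2*α - 1) := by
    rw [hIoo.1]; exact beta_integrable_iff (1-γ) (2*α-1)
  have hIioIff : IntegrableOn (fun s : ℝ => (t-s)^(2*(α-1)) * |s|^(-γ)) (Iio 0) ↔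
      (0 < 1 - γ ∧ 0 < 1 + γ - 2*α) := by
    rw [hIio.1]; exact beta_integrable_iff (1-γ) (1+γ-2*α)
  have hsplitSet : Iio t = Iio (0:ℝ) ∪ Ico 0 t := by
    ext x; simp only [mem_Iio, mem_union, mem_Ico]
    constructor
    · intro h; rcases lt_or_ge x 0 with h0 | h0
      · exact Or.inl h0
      · exact Or.inr ⟨h0, h⟩
    · rintro (h | ⟨_, h⟩)
      · linarith
      · exact h
  have hdisj : Disjoint (Iio (0:ℝ)) (Ico 0 t) := by
    rw [Set.disjoint_left]; rintro x hx ⟨h0, _⟩; exact absurd hx (not_lt.2 h0)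
  constructor
  · rw [memLp_two_iff_integrable_sq hFmeas, hsq,
      integrable_indicator_iff measurableSet_Iio]
    have hIioT : IntegrableOn (fun s : ℝ => (t-s)^(2*(α-1)) * |s|^(-γ)) (Iio t) ↔
        (IntegrableOn (fun s : ℝ => (t-s)^(2*(α-1)) * |s|^(-γ)) (Iio 0) ∧
         IntegrableOn (fun s : ℝ => (t-s)^(2*(α-1)) * |s|^(-γ)) (Ioo 0 t)) := by
      constructor
      · intro h
        exact ⟨h.mono_set (Iio_subset_Iio ht.le), h.mono_set (fun x hx => hx.2)⟩
      · rintro ⟨h1, h2⟩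
        rw [hsplitSet]
        exact h1.union ((integrableOn_Ico_iff_integrableOn_Ioo).2 h2)
    rw [hIioT, hIioIff, hIooIff]
    constructor
    · rintro ⟨⟨_, h1⟩, ⟨_, h2⟩⟩; constructor <;> linarith
    · rintro ⟨h1, h2⟩
      exact ⟨⟨by linarith, by linarith⟩, ⟨by linarith, by linarith⟩⟩
  · rintro ⟨h1, h2⟩
    have hg1 : IntegrableOn (fun s : ℝ => (t-s)^(2*(α-1)) * |s|^(-γ)) (Iio 0) :=
      hIioIff.2 ⟨by linarith, by linarith⟩
    have hg2 : IntegrableOn (fun s : ℝ => (t-s)^(2*(α-1)) * |s|^(-γ)) (Ioo 0 t) :=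
      hIooIff.2 ⟨by linarith, by linarith⟩
    have hspl : (∫ s in Iio t, (t-s)^(2*(α-1)) * |s|^(-γ))
        = (∫ s in Iio 0, (t-s)^(2*(α-1)) * |s|^(-γ))
          + ∫ s in Ioo 0 t, (t-s)^(2*(α-1)) * |s|^(-γ) := by
      rw [hsplitSet, setIntegral_union hdisj measurableSet_Ico hg1
        ((integrableOn_Ico_iff_integrableOn_Ioo).2 hg2), integral_Ico_eq_integral_Ioo]
    rw [hspl, hIio.2, hIoo.2]
    ring
end

section
/- Let γ ∈ (0,1), α ∈ (γ/2 − 1/2, γ/2 + 1/2) with α ≠ 0, set H := α − γ/2 + 1/2, and fix 0 < u < v. For 0 < ε < v − u define C₁(ε) := ∫₀^u ((u+ε−w)^α − (u−w)^α)((v+ε−w)^α − (v−w)^α) w^{−γ} dw, C₂(ε) := ∫_u^{u+ε} (u+ε−w)^α ((v+ε−w)^α − (v−w)^α) w^{−γ} dw, C₃(ε) := ∫₀¹ ((u+ε+w)^α − (u+w)^α)((v+ε+w)^α − (v+w)^α) w^{−γ} dw, C₄(ε) := ∫₁^∞ ((u+ε+w)^α − (u+w)^α)((v+ε+w)^α −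 (v+w)^α) w^{−γ} dw. Then lim_{ε→0⁺} ε^{−2H} ( C₁(ε) + C₂(ε) + C₃(ε) + C₄(ε) ) = 0. -/
open MeasureTheory Real Set Filter



private lemma mvt_rpow {a x ε : ℝ} (ha : a ≤ 1) (hx : 0 < x) (hε : 0 ≤ ε) :
    |(x + ε) ^ a - x ^ a| ≤ |a| * x ^ (a - 1) * ε := by
  have key := norm_image_sub_le_of_norm_deriv_le_segment'
    (f := fun t : ℝ => t ^ a) (f' := fun t : ℝ => a * t ^ (a - 1)) (a := x) (b := x + ε)
    (C := |a| * x ^ (a - 1)) ?_ ?_ (x + ε) (right_mem_Icc.2 (by linarith))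
  · simpa [Real.norm_eq_abs, add_sub_cancel_left] using key
  · intro t ht
    have htpos : 0 < t := lt_of_lt_of_le hx ht.1
    exact (Real.hasDerivAt_rpow_const (Or.inl htpos.ne')).hasDerivWithinAt
  · intro t ht
    have htpos : 0 < t := lt_of_lt_of_le hx ht.1
    rw [Real.norm_eq_abs, abs_mul, abs_of_nonneg (Real.rpow_nonneg htpos.le _)]
    exact mul_le_mul_of_nonneg_left
      (Real.rpow_le_rpow_of_nonpos hx ht.1 (by linarith)) (abs_nonneg a)

private lemma abs_rpow_diff_le_self {a x ε : ℝ} (ha : a ≤ 0) (hx : 0 < x) (hε : 0 ≤ ε) :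
    |(x + ε) ^ a - x ^ a| ≤ x ^ a := by
  have h1 : (x + ε) ^ a ≤ x ^ a :=
    Real.rpow_le_rpow_of_nonpos hx (by linarith) ha
  have h2 : (0:ℝ) ≤ (x + ε) ^ a := Real.rpow_nonneg (by linarith) a
  rw [abs_sub_comm, abs_of_nonneg (sub_nonneg.2 h1)]
  linarith

private lemma integ_one {u β c : ℝ} (hu : 0 < u) (hβ : -1 < β) (hc0 : 0 ≤ c) (hc1 : c < 1) :
    IntegrableOn (fun w : ℝ => (u - w) ^ β * w ^ (-c)) (Ioo 0 u) := by
  have hmeasA : AEStronglyMeasurable (fun w : ℝ => (u - w) ^ β * w ^ (-c))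
      (volume.restrict (Ioc 0 (u/2))) := by
    refine (ContinuousOn.mul (ContinuousOn.rpow_const
      (continuousOn_const.sub continuousOn_id) ?_)
      (ContinuousOn.rpow_const continuousOn_id ?_)).aestronglyMeasurable measurableSet_Ioc
    · intro w hw; exact Or.inl (by show u - w ≠ 0; intro h; nlinarith [hw.1, hw.2])
    · intro w hw; exact Or.inl (by simpa using hw.1.ne')
  have hmeasB : AEStronglyMeasurable (fun w : ℝ => (u - w) ^ β * w ^ (-c))
      (volume.restrict (Ioo (u/2) u)) := by
    refine (ContinuousOn.mul (ContinuousOn.rpow_const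
      (continuousOn_const.sub continuousOn_id) ?_)
      (ContinuousOn.rpow_const continuousOn_id ?_)).aestronglyMeasurable measurableSet_Ioo
    · intro w hw; exact Or.inl (by show u - w ≠ 0; intro h; nlinarith [hw.2])
    · intro w hw; exact Or.inl (by simp only [id]; nlinarith [hw.1])
  have hA : IntegrableOn (fun w : ℝ => (u - w) ^ β * w ^ (-c)) (Ioc 0 (u/2)) := by
    have hint : IntegrableOn (fun w : ℝ => w ^ (-c)) (Ioc 0 (u/2)) :=
      (intervalIntegral.intervalIntegrable_rpow' (by linarith) (a := 0) (b := u/2)).1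
    refine (hint.const_mul ((u/2) ^ β + u ^ β)).mono' hmeasA ?_
    refine ae_restrict_of_forall_mem measurableSet_Ioc fun w hw => ?_
    have hw0 : 0 < w := hw.1
    have huw : u/2 ≤ u - w := by linarith [hw.2]
    have huw0 : (0:ℝ) < u - w := by linarith
    rw [Real.norm_eq_abs, abs_mul, abs_of_nonneg (Real.rpow_nonneg huw0.le _),
      abs_of_nonneg (Real.rpow_nonneg hw0.le _)]
    refine mul_le_mul_of_nonneg_right ?_ (Real.rpow_nonneg hw0.le _)
    rcases le_or_gt 0 β with hβ' | hβ'
    · have : (u - w) ^ β ≤ u ^ β := Real.rpow_le_rpow huw0.le (by linarith) hβ'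
      have h0 : (0:ℝ) ≤ (u/2) ^ β := Real.rpow_nonneg (by linarith) _
      linarith
    · have : (u - w) ^ β ≤ (u/2) ^ β :=
        Real.rpow_le_rpow_of_nonpos (by linarith) huw hβ'.le
      have h0 : (0:ℝ) ≤ u ^ β := Real.rpow_nonneg hu.le _
      linarith
  have hB : IntegrableOn (fun w : ℝ => (u - w) ^ β * w ^ (-c)) (Ioo (u/2) u) := by
    have h1 : IntervalIntegrable (fun x : ℝ => x ^ β) volume 0 (u/2) :=
      intervalIntegral.intervalIntegrable_rpow' hβ
    have h2 := h1.comp_sub_left u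
    rw [sub_zero, show u - u/2 = u/2 by ring] at h2
    have h3 : IntegrableOn (fun x : ℝ => (u - x) ^ β) (Ioo (u/2) u) :=
      h2.symm.1.mono_set Ioo_subset_Ioc_self
    refine (h3.mul_const ((u/2) ^ (-c))).mono' hmeasB ?_
    refine ae_restrict_of_forall_mem measurableSet_Ioo fun w hw => ?_
    have huw0 : (0:ℝ) < u - w := by linarith [hw.2]
    have hw0 : (0:ℝ) < w := by linarith [hw.1]
    rw [Real.norm_eq_abs, abs_mul, abs_of_nonneg (Real.rpow_nonneg huw0.le _),
      abs_of_nonneg (Real.rpow_nonneg hw0.le _)]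
    refine mul_le_mul_of_nonneg_left ?_ (Real.rpow_nonneg huw0.le _)
    exact Real.rpow_le_rpow_of_nonpos (by linarith) hw.1.le (by linarith)
  refine (hA.union hB).mono_set fun w hw => ?_
  rcases le_or_gt w (u/2) with h | h
  · exact Or.inl ⟨hw.1, h⟩
  · exact Or.inr ⟨h, hw.2⟩

private lemma aux_master {F : ℝ → ℝ} {K p q : ℝ} {l : Filter ℝ}
    (hl : l ≤ nhdsWithin 0 (Ioi 0)) (hpq : q < p)
    (h : ∀ᶠ ε in l, |F ε| ≤ K * ε ^ p) :
    Tendsto (fun ε => F ε / ε ^ q) l (nhds 0) := by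
  have hpos : ∀ᶠ ε in l, (0:ℝ) < ε := by
    filter_upwards [hl self_mem_nhdsWithin] with x hx; exact hx
  refine squeeze_zero_norm' (a := fun ε => K * ε ^ (p - q)) ?_ ?_
  · filter_upwards [h, hpos] with ε hε hε0
    have hq' : (0:ℝ) < ε ^ q := Real.rpow_pos_of_pos hε0 q
    rw [Real.norm_eq_abs, abs_div, abs_of_pos hq', div_le_iff₀ hq']
    calc |F ε| ≤ K * ε ^ p := hε
      _ = K * ε ^ (p - q) * ε ^ q := by
          rw [mul_assoc, ← Real.rpow_add hε0, sub_add_cancel]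
  · have h0 : Tendsto (fun ε : ℝ => K * ε ^ (p - q)) (nhds 0) (nhds 0) := by
      have hc : ContinuousAt (fun ε : ℝ => ε ^ (p - q)) 0 :=
        Real.continuousAt_rpow_const 0 (p - q) (Or.inr (by linarith))
      have := (hc.tendsto).const_mul K
      rwa [Real.zero_rpow (by linarith : p - q ≠ 0), mul_zero] at this
    exact h0.mono_left (hl.trans nhdsWithin_le_nhds)


private lemma bound4 {γ α u v ε : ℝ} (hγ0 : 0 < γ) (hα2 : α < γ/2 + 1/2) (hγ1 : γ < 1)
    (hu : 0 < u) (hv : 0 < v) (hε : 0 < ε) :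
    |∫ w in Set.Ioi (1:ℝ), ((u+ε+w)^α - (u+w)^α) * ((v+ε+w)^α - (v+w)^α) * w^(-γ)| ≤
      (|α| * |α| * ∫ w in Set.Ioi (1:ℝ), w^(α-1) * w^(α-1) * w^(-γ)) * ε ^ (2:ℝ) := by
  have hαle1 : α ≤ 1 := by linarith
  have hαm1 : α - 1 ≤ 0 := by linarith
  have hgint : IntegrableOn (fun w : ℝ => w^(α-1) * w^(α-1) * w^(-γ)) (Ioi 1) := by
    have h := integrableOn_Ioi_rpow_of_lt (a := (α-1)+(α-1)+(-γ)) (by linarith) one_pos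
    refine h.congr_fun (fun x hx => ?_) measurableSet_Ioi
    have hx0 : (0:ℝ) < x := lt_trans one_pos hx
    beta_reduce; rw [Real.rpow_add hx0, Real.rpow_add hx0]
  have key := norm_integral_le_of_norm_le
    (f := fun w : ℝ => ((u+ε+w)^α - (u+w)^α) * ((v+ε+w)^α - (v+w)^α) * w^(-γ))
    (hgint.const_mul (|α| * |α| * (ε * ε))) ?_
  · rw [Real.norm_eq_abs] at key
    calc |∫ w in Set.Ioi (1:ℝ), ((u+ε+w)^α - (u+w)^α) * ((v+ε+w)^α - (v+w)^α) * w^(-γ)|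
        ≤ ∫ w in Set.Ioi (1:ℝ), (|α| * |α| * (ε * ε)) * (w^(α-1) * w^(α-1) * w^(-γ)) := key
      _ = (|α| * |α| * (ε * ε)) * ∫ w in Set.Ioi (1:ℝ), w^(α-1) * w^(α-1) * w^(-γ) :=
          integral_const_mul _ _
      _ = (|α| * |α| * ∫ w in Set.Ioi (1:ℝ), w^(α-1) * w^(α-1) * w^(-γ)) * ε ^ (2:ℝ) := by
          rw [show (2:ℝ) = ((2:ℕ):ℝ) by norm_num, Real.rpow_natCast]; ring
  · refine ae_restrict_of_forall_mem measurableSet_Ioi fun w hw => ?_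
    have hw0 : (0:ℝ) < w := lt_trans one_pos hw
    have h1 : |(u+ε+w)^α - (u+w)^α| ≤ |α| * w^(α-1) * ε := by
      rw [show u+ε+w = (u+w)+ε by ring]
      calc |((u+w)+ε)^α - (u+w)^α| ≤ |α| * (u+w)^(α-1) * ε :=
            mvt_rpow hαle1 (by linarith) hε.le
        _ ≤ |α| * w^(α-1) * ε :=
            mul_le_mul_of_nonneg_right (mul_le_mul_of_nonneg_left
              (Real.rpow_le_rpow_of_nonpos hw0 (by linarith) hαm1) (abs_nonneg α)) hε.le
    have h2 : |(v+ε+w)^α - (v+w)^α| ≤ |α| * w^(α-1) * ε := by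
      rw [show v+ε+w = (v+w)+ε by ring]
      calc |((v+w)+ε)^α - (v+w)^α| ≤ |α| * (v+w)^(α-1) * ε :=
            mvt_rpow hαle1 (by linarith) hε.le
        _ ≤ |α| * w^(α-1) * ε :=
            mul_le_mul_of_nonneg_right (mul_le_mul_of_nonneg_left
              (Real.rpow_le_rpow_of_nonpos hw0 (by linarith) hαm1) (abs_nonneg α)) hε.le
    rw [Real.norm_eq_abs, abs_mul, abs_mul, abs_of_nonneg (Real.rpow_nonneg hw0.le (-γ))]
    calc |(u+ε+w)^α - (u+w)^α| * |(v+ε+w)^α - (v+w)^α| * w^(-γ)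
        ≤ (|α| * w^(α-1) * ε) * (|α| * w^(α-1) * ε) * w^(-γ) :=
          mul_le_mul_of_nonneg_right
            (mul_le_mul h1 h2 (abs_nonneg _) (by positivity)) (Real.rpow_nonneg hw0.le _)
      _ = (|α| * |α| * (ε * ε)) * (w^(α-1) * w^(α-1) * w^(-γ)) := by ring

private lemma bound3 {γ α u v ε : ℝ} (hγ0 : 0 < γ) (hα2 : α < γ/2 + 1/2) (hγ1 : γ < 1)
    (hu : 0 < u) (hv : 0 < v) (hε : 0 < ε) :
    |∫ w in Set.Ioo (0:ℝ) 1, ((u+ε+w)^α - (u+w)^α) * ((v+ε+w)^α - (v+w)^α) * w^(-γ)| ≤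
      ((|α| * u^(α-1)) * (|α| * v^(α-1)) * ∫ w in Set.Ioo (0:ℝ) 1, w^(-γ)) * ε ^ (2:ℝ) := by
  have hαle1 : α ≤ 1 := by linarith
  have hαm1 : α - 1 ≤ 0 := by linarith
  have hgint : IntegrableOn (fun w : ℝ => w^(-γ)) (Ioo 0 1) :=
    (intervalIntegral.intervalIntegrable_rpow' (by linarith) (a := 0) (b := 1)).1.mono_set
      Ioo_subset_Ioc_self
  have key := norm_integral_le_of_norm_le
    (f := fun w : ℝ => ((u+ε+w)^α - (u+w)^α) * ((v+ε+w)^α - (v+w)^α) * w^(-γ))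
    (hgint.const_mul ((|α| * u^(α-1)) * (|α| * v^(α-1)) * (ε * ε))) ?_
  · rw [Real.norm_eq_abs] at key
    calc |∫ w in Set.Ioo (0:ℝ) 1, ((u+ε+w)^α - (u+w)^α) * ((v+ε+w)^α - (v+w)^α) * w^(-γ)|
        ≤ ∫ w in Set.Ioo (0:ℝ) 1, ((|α| * u^(α-1)) * (|α| * v^(α-1)) * (ε * ε)) * w^(-γ) := key
      _ = ((|α| * u^(α-1)) * (|α| * v^(α-1)) * (ε * ε)) * ∫ w in Set.Ioo (0:ℝ) 1, w^(-γ) :=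
          integral_const_mul _ _
      _ = ((|α| * u^(α-1)) * (|α| * v^(α-1)) * ∫ w in Set.Ioo (0:ℝ) 1, w^(-γ)) * ε ^ (2:ℝ) := by
          rw [show (2:ℝ) = ((2:ℕ):ℝ) by norm_num, Real.rpow_natCast]; ring
  · refine ae_restrict_of_forall_mem measurableSet_Ioo fun w hw => ?_
    have hw0 : (0:ℝ) < w := hw.1
    have h1 : |(u+ε+w)^α - (u+w)^α| ≤ |α| * u^(α-1) * ε := by
      rw [show u+ε+w = (u+w)+ε by ring]
      calc |((u+w)+ε)^α - (u+w)^α| ≤ |α| * (u+w)^(α-1) * ε :=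
            mvt_rpow hαle1 (by linarith) hε.le
        _ ≤ |α| * u^(α-1) * ε :=
            mul_le_mul_of_nonneg_right (mul_le_mul_of_nonneg_left
              (Real.rpow_le_rpow_of_nonpos hu (by linarith) hαm1) (abs_nonneg α)) hε.le
    have h2 : |(v+ε+w)^α - (v+w)^α| ≤ |α| * v^(α-1) * ε := by
      rw [show v+ε+w = (v+w)+ε by ring]
      calc |((v+w)+ε)^α - (v+w)^α| ≤ |α| * (v+w)^(α-1) * ε :=
            mvt_rpow hαle1 (by linarith) hε.le
        _ ≤ |α| * v^(α-1) * ε :=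
            mul_le_mul_of_nonneg_right (mul_le_mul_of_nonneg_left
              (Real.rpow_le_rpow_of_nonpos hv (by linarith) hαm1) (abs_nonneg α)) hε.le
    rw [Real.norm_eq_abs, abs_mul, abs_mul, abs_of_nonneg (Real.rpow_nonneg hw0.le (-γ))]
    calc |(u+ε+w)^α - (u+w)^α| * |(v+ε+w)^α - (v+w)^α| * w^(-γ)
        ≤ (|α| * u^(α-1) * ε) * (|α| * v^(α-1) * ε) * w^(-γ) :=
          mul_le_mul_of_nonneg_right
            (mul_le_mul h1 h2 (abs_nonneg _) (by positivity)) (Real.rpow_nonneg hw0.le _)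
      _ = ((|α| * u^(α-1)) * (|α| * v^(α-1)) * (ε * ε)) * w^(-γ) := by ring


private lemma bound1pos {γ α u v ε : ℝ} (hγ0 : 0 < γ) (hγ1 : γ < 1)
    (hα2 : α < γ/2 + 1/2) (hαpos : 0 < α)
    (hu : 0 < u) (huv : u < v) (hε : 0 < ε) :
    |∫ w in Set.Ioo 0 u, ((u+ε-w)^α - (u-w)^α) * ((v+ε-w)^α - (v-w)^α) * w^(-γ)| ≤
      (|α| * (|α| * (v-u)^(α-1)) *
        ∫ w in Set.Ioo 0 u, (u-w)^(α-1) * w^(-γ)) * ε ^ (2:ℝ) := by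
  have hαle1 : α ≤ 1 := by linarith
  have hαm1 : α - 1 ≤ 0 := by linarith
  have hvu : (0:ℝ) < v - u := by linarith
  have hgint : IntegrableOn (fun w : ℝ => (u-w)^(α-1) * w^(-γ)) (Ioo 0 u) :=
    integ_one hu (by linarith) hγ0.le hγ1
  have key := norm_integral_le_of_norm_le
    (f := fun w : ℝ => ((u+ε-w)^α - (u-w)^α) * ((v+ε-w)^α - (v-w)^α) * w^(-γ))
    (hgint.const_mul (|α| * (|α| * (v-u)^(α-1)) * (ε * ε))) ?_
  · rw [Real.norm_eq_abs] at key
    calc |∫ w in Set.Ioo 0 u, ((u+ε-w)^α - (u-w)^α) * ((v+ε-w)^α - (v-w)^α) * w^(-γ)|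
        ≤ ∫ w in Set.Ioo 0 u,
            (|α| * (|α| * (v-u)^(α-1)) * (ε * ε)) * ((u-w)^(α-1) * w^(-γ)) := key
      _ = (|α| * (|α| * (v-u)^(α-1)) * (ε * ε)) *
            ∫ w in Set.Ioo 0 u, (u-w)^(α-1) * w^(-γ) := integral_const_mul _ _
      _ = (|α| * (|α| * (v-u)^(α-1)) * ∫ w in Set.Ioo 0 u, (u-w)^(α-1) * w^(-γ)) * ε ^ (2:ℝ) := by
          rw [show (2:ℝ) = ((2:ℕ):ℝ) by norm_num, Real.rpow_natCast]; ring
  · refine ae_restrict_of_forall_mem measurableSet_Ioo fun w hw => ?_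
    have hw0 : (0:ℝ) < w := hw.1
    have huw : (0:ℝ) < u - w := by linarith [hw.2]
    have hvw : (0:ℝ) < v - w := by linarith [hw.2]
    have h1 : |(u+ε-w)^α - (u-w)^α| ≤ |α| * (u-w)^(α-1) * ε := by
      rw [show u+ε-w = (u-w)+ε by ring]
      exact mvt_rpow hαle1 huw hε.le
    have h2 : |(v+ε-w)^α - (v-w)^α| ≤ |α| * (v-u)^(α-1) * ε := by
      rw [show v+ε-w = (v-w)+ε by ring]
      calc |((v-w)+ε)^α - (v-w)^α| ≤ |α| * (v-w)^(α-1) * ε := mvt_rpow hαle1 hvw hε.le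
        _ ≤ |α| * (v-u)^(α-1) * ε :=
            mul_le_mul_of_nonneg_right (mul_le_mul_of_nonneg_left
              (Real.rpow_le_rpow_of_nonpos hvu (by linarith [hw.2]) hαm1) (abs_nonneg α)) hε.le
    rw [Real.norm_eq_abs, abs_mul, abs_mul, abs_of_nonneg (Real.rpow_nonneg hw0.le (-γ))]
    calc |(u+ε-w)^α - (u-w)^α| * |(v+ε-w)^α - (v-w)^α| * w^(-γ)
        ≤ (|α| * (u-w)^(α-1) * ε) * (|α| * (v-u)^(α-1) * ε) * w^(-γ) :=
          mul_le_mul_of_nonneg_right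
            (mul_le_mul h1 h2 (abs_nonneg _) (by positivity)) (Real.rpow_nonneg hw0.le _)
      _ = (|α| * (|α| * (v-u)^(α-1)) * (ε * ε)) * ((u-w)^(α-1) * w^(-γ)) := by ring

private lemma bound1neg {γ α u v ε : ℝ} (hγ0 : 0 < γ) (hγ1 : γ < 1)
    (hα1 : γ/2 - 1/2 < α) (hαneg : α < 0)
    (hu : 0 < u) (huv : u < v) (hε : 0 < ε) :
    |∫ w in Set.Ioo 0 u, ((u+ε-w)^α - (u-w)^α) * ((v+ε-w)^α - (v-w)^α) * w^(-γ)| ≤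
      ((|α| * (v-u)^(α-1)) * ∫ w in Set.Ioo 0 u, (u-w)^α * w^(-γ)) * ε ^ (1:ℝ) := by
  have hαle1 : α ≤ 1 := by linarith
  have hαm1 : α - 1 ≤ 0 := by linarith
  have hvu : (0:ℝ) < v - u := by linarith
  have hgint : IntegrableOn (fun w : ℝ => (u-w)^α * w^(-γ)) (Ioo 0 u) :=
    integ_one hu (by linarith) hγ0.le hγ1
  have key := norm_integral_le_of_norm_le
    (f := fun w : ℝ => ((u+ε-w)^α - (u-w)^α) * ((v+ε-w)^α - (v-w)^α) * w^(-γ))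
    (hgint.const_mul ((|α| * (v-u)^(α-1)) * ε)) ?_
  · rw [Real.norm_eq_abs] at key
    calc |∫ w in Set.Ioo 0 u, ((u+ε-w)^α - (u-w)^α) * ((v+ε-w)^α - (v-w)^α) * w^(-γ)|
        ≤ ∫ w in Set.Ioo 0 u, ((|α| * (v-u)^(α-1)) * ε) * ((u-w)^α * w^(-γ)) := key
      _ = ((|α| * (v-u)^(α-1)) * ε) * ∫ w in Set.Ioo 0 u, (u-w)^α * w^(-γ) :=
          integral_const_mul _ _
      _ = ((|α| * (v-u)^(α-1)) * ∫ w in Set.Ioo 0 u, (u-w)^α * w^(-γ)) * ε ^ (1:ℝ) := by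
          rw [Real.rpow_one]; ring
  · refine ae_restrict_of_forall_mem measurableSet_Ioo fun w hw => ?_
    have hw0 : (0:ℝ) < w := hw.1
    have huw : (0:ℝ) < u - w := by linarith [hw.2]
    have hvw : (0:ℝ) < v - w := by linarith [hw.2]
    have h1 : |(u+ε-w)^α - (u-w)^α| ≤ (u-w)^α := by
      rw [show u+ε-w = (u-w)+ε by ring]
      exact abs_rpow_diff_le_self hαneg.le huw hε.le
    have h2 : |(v+ε-w)^α - (v-w)^α| ≤ |α| * (v-u)^(α-1) * ε := by
      rw [show v+ε-w = (v-w)+ε by ring]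
      calc |((v-w)+ε)^α - (v-w)^α| ≤ |α| * (v-w)^(α-1) * ε := mvt_rpow hαle1 hvw hε.le
        _ ≤ |α| * (v-u)^(α-1) * ε :=
            mul_le_mul_of_nonneg_right (mul_le_mul_of_nonneg_left
              (Real.rpow_le_rpow_of_nonpos hvu (by linarith [hw.2]) hαm1) (abs_nonneg α)) hε.le
    rw [Real.norm_eq_abs, abs_mul, abs_mul, abs_of_nonneg (Real.rpow_nonneg hw0.le (-γ))]
    calc |(u+ε-w)^α - (u-w)^α| * |(v+ε-w)^α - (v-w)^α| * w^(-γ)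
        ≤ ((u-w)^α) * (|α| * (v-u)^(α-1) * ε) * w^(-γ) :=
          mul_le_mul_of_nonneg_right
            (mul_le_mul h1 h2 (abs_nonneg _) (Real.rpow_nonneg huw.le _))
            (Real.rpow_nonneg hw0.le _)
      _ = ((|α| * (v-u)^(α-1)) * ε) * ((u-w)^α * w^(-γ)) := by ring

private lemma bound2 {γ α u v ε : ℝ} (hγ0 : 0 < γ) (hγ1 : γ < 1)
    (hα1 : γ/2 - 1/2 < α) (hα2 : α < γ/2 + 1/2)
    (hu : 0 < u) (huv : u < v) (hε : 0 < ε) (hε2 : ε < (v-u)/2) :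
    |∫ w in Set.Ioo u (u+ε), (u+ε-w)^α * ((v+ε-w)^α - (v-w)^α) * w^(-γ)| ≤
      (|α| * ((v-u)/2)^(α-1) * u^(-γ) / (α+1)) * ε ^ (α+2) := by
  have hαle1 : α ≤ 1 := by linarith
  have hαm1 : α - 1 ≤ 0 := by linarith
  have hαgt : (-1:ℝ) < α := by linarith
  have hα1pos : (0:ℝ) < α + 1 := by linarith
  have hvu2 : (0:ℝ) < (v-u)/2 := by linarith
  have hg2 : IntegrableOn (fun w : ℝ => (u+ε-w)^α) (Ioo u (u+ε)) := by
    have h1 : IntervalIntegrable (fun x : ℝ => x ^ α) volume 0 ε :=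
      intervalIntegral.intervalIntegrable_rpow' hαgt
    have h2 := h1.comp_sub_left (u+ε)
    rw [sub_zero, add_sub_cancel_right] at h2
    exact h2.symm.1.mono_set Ioo_subset_Ioc_self
  have hval : (∫ w in Set.Ioo u (u+ε), (u+ε-w)^α) = ε^(α+1)/(α+1) := by
    rw [← MeasureTheory.integral_Ioc_eq_integral_Ioo,
      ← intervalIntegral.integral_of_le (by linarith : u ≤ u+ε),
      intervalIntegral.integral_comp_sub_left (fun x : ℝ => x ^ α) (u+ε),
      show u+ε-(u+ε) = 0 by ring, show u+ε-u = ε by ring,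
      integral_rpow (Or.inl hαgt),
      Real.zero_rpow (by linarith : α+1 ≠ 0)]
    ring
  have key := norm_integral_le_of_norm_le
    (f := fun w : ℝ => (u+ε-w)^α * ((v+ε-w)^α - (v-w)^α) * w^(-γ))
    (hg2.const_mul (|α| * ((v-u)/2)^(α-1) * u^(-γ) * ε)) ?_
  · rw [Real.norm_eq_abs] at key
    calc |∫ w in Set.Ioo u (u+ε), (u+ε-w)^α * ((v+ε-w)^α - (v-w)^α) * w^(-γ)|
        ≤ ∫ w in Set.Ioo u (u+ε), (|α| * ((v-u)/2)^(α-1) * u^(-γ) * ε) * (u+ε-w)^α := key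
      _ = (|α| * ((v-u)/2)^(α-1) * u^(-γ) * ε) * ∫ w in Set.Ioo u (u+ε), (u+ε-w)^α :=
          integral_const_mul _ _
      _ = (|α| * ((v-u)/2)^(α-1) * u^(-γ) / (α+1)) * ε ^ (α+2) := by
          have hpow : ε ^ (α+2) = ε * ε^(α+1) := by
            rw [show α+2 = 1+(α+1) by ring, Real.rpow_add hε, Real.rpow_one]
          rw [hval, hpow]; ring
  · refine ae_restrict_of_forall_mem measurableSet_Ioo fun w hw => ?_
    have hw0 : (0:ℝ) < w := lt_trans hu hw.1
    have huw : (0:ℝ) < u+ε-w := by linarith [hw.2]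
    have hvw : (v-u)/2 ≤ v - w := by linarith [hw.2]
    have hvw0 : (0:ℝ) < v - w := by linarith
    have h2 : |(v+ε-w)^α - (v-w)^α| ≤ |α| * ((v-u)/2)^(α-1) * ε := by
      rw [show v+ε-w = (v-w)+ε by ring]
      calc |((v-w)+ε)^α - (v-w)^α| ≤ |α| * (v-w)^(α-1) * ε := mvt_rpow hαle1 hvw0 hε.le
        _ ≤ |α| * ((v-u)/2)^(α-1) * ε :=
            mul_le_mul_of_nonneg_right (mul_le_mul_of_nonneg_left
              (Real.rpow_le_rpow_of_nonpos hvu2 hvw hαm1) (abs_nonneg α)) hε.le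
    have h3 : w^(-γ) ≤ u^(-γ) :=
      Real.rpow_le_rpow_of_nonpos hu hw.1.le (by linarith)
    rw [Real.norm_eq_abs, abs_mul, abs_mul, abs_of_nonneg (Real.rpow_nonneg hw0.le (-γ)),
      abs_of_nonneg (Real.rpow_nonneg huw.le α)]
    calc (u+ε-w)^α * |(v+ε-w)^α - (v-w)^α| * w^(-γ)
        ≤ (u+ε-w)^α * (|α| * ((v-u)/2)^(α-1) * ε) * u^(-γ) := by
          refine mul_le_mul ?_ h3 (Real.rpow_nonneg hw0.le _) (by positivity)
          exact mul_le_mul_of_nonneg_left h2 (Real.rpow_nonneg huw.le _)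
      _ = (|α| * ((v-u)/2)^(α-1) * u^(-γ) * ε) * (u+ε-w)^α := by ring
/-- the covariance of two disjoint increments of the GFBM is `o(ε^{2H})`
as `ε ↓ 0` (second claim of Lemma 4.1). -/
theorem stmt5 (γ α : ℝ) (hγ0 : 0 < γ) (hγ1 : γ < 1)
    (hα1 : γ/2 - 1/2 < α) (hα2 : α < γ/2 + 1/2) (hα0 : α ≠ 0)
    (u v : ℝ) (hu : 0 < u) (huv : u < v) :
    Tendsto (fun ε : ℝ =>
      ((∫ w in Set.Ioo 0 u,
          ((u+ε-w)^α - (u-w)^α) * ((v+ε-w)^α - (v-w)^α) * w^(-γ)) +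
        (∫ w in Set.Ioo u (u+ε),
          (u+ε-w)^α * ((v+ε-w)^α - (v-w)^α) * w^(-γ)) +
        (∫ w in Set.Ioo (0:ℝ) 1,
          ((u+ε+w)^α - (u+w)^α) * ((v+ε+w)^α - (v+w)^α) * w^(-γ)) +
        (∫ w in Set.Ioi (1:ℝ),
          ((u+ε+w)^α - (u+w)^α) * ((v+ε+w)^α - (v+w)^α) * w^(-γ))) /
        ε^(2*(α - γ/2 + 1/2)))
      (nhdsWithin 0 (Set.Ioo 0 (v - u))) (nhds 0) := by
  have hv : 0 < v := lt_trans hu huv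
  have hvu : (0:ℝ) < v - u := by linarith
  have hl : nhdsWithin (0:ℝ) (Set.Ioo 0 (v-u)) ≤ nhdsWithin 0 (Ioi 0) :=
    nhdsWithin_mono _ Set.Ioo_subset_Ioi_self
  have hεpos : ∀ᶠ ε in nhdsWithin (0:ℝ) (Set.Ioo 0 (v-u)), (0:ℝ) < ε := by
    filter_upwards [hl self_mem_nhdsWithin] with x hx; exact hx
  have hεsmall : ∀ᶠ ε in nhdsWithin (0:ℝ) (Set.Ioo 0 (v-u)), ε < (v-u)/2 := by
    have : Set.Iio ((v-u)/2) ∈ nhds (0:ℝ) := Iio_mem_nhds (by linarith)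
    exact eventually_iff_exists_mem.2 ⟨_, nhdsWithin_le_nhds this, fun x hx => hx⟩
  have T1 : Tendsto (fun ε : ℝ => (∫ w in Set.Ioo 0 u,
      ((u+ε-w)^α - (u-w)^α) * ((v+ε-w)^α - (v-w)^α) * w^(-γ)) / ε^(2*(α - γ/2 + 1/2)))
      (nhdsWithin 0 (Set.Ioo 0 (v - u))) (nhds 0) := by
    rcases hα0.lt_or_gt with hαneg | hαpos
    · refine aux_master (K := (|α| * (v-u)^(α-1)) * ∫ w in Set.Ioo 0 u, (u-w)^α * w^(-γ))
        hl (show 2*(α - γ/2 + 1/2) < 1 by linarith) ?_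
      filter_upwards [hεpos] with ε hε
      exact bound1neg hγ0 hγ1 hα1 hαneg hu huv hε
    · refine aux_master
        (K := |α| * (|α| * (v-u)^(α-1)) * ∫ w in Set.Ioo 0 u, (u-w)^(α-1) * w^(-γ))
        hl (show 2*(α - γ/2 + 1/2) < 2 by linarith) ?_
      filter_upwards [hεpos] with ε hε
      exact bound1pos hγ0 hγ1 hα2 hαpos hu huv hε
  have T2 : Tendsto (fun ε : ℝ => (∫ w in Set.Ioo u (u+ε),
      (u+ε-w)^α * ((v+ε-w)^α - (v-w)^α) * w^(-γ)) / ε^(2*(α - γ/2 + 1/2)))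
      (nhdsWithin 0 (Set.Ioo 0 (v - u))) (nhds 0) := by
    refine aux_master (K := |α| * ((v-u)/2)^(α-1) * u^(-γ) / (α+1))
      hl (show 2*(α - γ/2 + 1/2) < α + 2 by linarith) ?_
    filter_upwards [hεpos, hεsmall] with ε hε hε2
    exact bound2 hγ0 hγ1 hα1 hα2 hu huv hε hε2
  have T3 : Tendsto (fun ε : ℝ => (∫ w in Set.Ioo (0:ℝ) 1,
      ((u+ε+w)^α - (u+w)^α) * ((v+ε+w)^α - (v+w)^α) * w^(-γ)) / ε^(2*(α - γ/2 + 1/2)))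
      (nhdsWithin 0 (Set.Ioo 0 (v - u))) (nhds 0) := by
    refine aux_master
      (K := (|α| * u^(α-1)) * (|α| * v^(α-1)) * ∫ w in Set.Ioo (0:ℝ) 1, w^(-γ))
      hl (show 2*(α - γ/2 + 1/2) < 2 by linarith) ?_
    filter_upwards [hεpos] with ε hε
    exact bound3 hγ0 hα2 hγ1 hu hv hε
  have T4 : Tendsto (fun ε : ℝ => (∫ w in Set.Ioi (1:ℝ),
      ((u+ε+w)^α - (u+w)^α) * ((v+ε+w)^α - (v+w)^α) * w^(-γ)) / ε^(2*(α - γ/2 + 1/2)))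
      (nhdsWithin 0 (Set.Ioo 0 (v - u))) (nhds 0) := by
    refine aux_master
      (K := |α| * |α| * ∫ w in Set.Ioi (1:ℝ), w^(α-1) * w^(α-1) * w^(-γ))
      hl (show 2*(α - γ/2 + 1/2) < 2 by linarith) ?_
    filter_upwards [hεpos] with ε hε
    exact bound4 hγ0 hα2 hγ1 hu hv hε
  have hsum := ((T1.add T2).add T3).add T4
  simp only [add_zero] at hsum
  simpa only [add_div] using hsum
end

section
/- Let γ ∈ (0,1) and α ∈ (γ/2 − 1/2, γ/2 + 1/2). Then lim_{x→∞} ∫_x^∞ ((1+v)^α − v^α)² (v−x)^{−γ} dv = 0. -/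
open MeasureTheory Real Set Filter

/-- MVT bound: `((1+v)^α - v^α)^2 ≤ α^2 * v^(2α-2)` for `0 < v`, `α ≤ 1`. -/
lemma stmt9_aux_sq (α : ℝ) (hα : α ≤ 1) {v : ℝ} (hv : 0 < v) :
    ((1 + v) ^ α - v ^ α) ^ 2 ≤ α ^ 2 * v ^ (2 * α - 2) := by
  obtain ⟨c, hc, hderiv⟩ := exists_hasDerivAt_eq_slope (fun t : ℝ => t ^ α)
    (fun t => α * t ^ (α - 1)) (by linarith : v < v + 1)
    (fun t ht => (Real.continuousAt_rpow_const t α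
      (Or.inl (ne_of_gt (lt_of_lt_of_le hv ht.1)))).continuousWithinAt)
    (fun t ht => Real.hasDerivAt_rpow_const
      (Or.inl (ne_of_gt (lt_trans hv ht.1))))
  have hc0 : 0 < c := lt_trans hv hc.1
  have hkey : (1 + v) ^ α - v ^ α = α * c ^ (α - 1) := by
    have h1 : v + 1 - v = (1 : ℝ) := by ring
    rw [hderiv, h1, div_one, add_comm]
  rw [hkey, mul_pow]
  have hsq : (c ^ (α - 1)) ^ 2 = c ^ (2 * α - 2) := by
    rw [← Real.rpow_natCast (c ^ (α - 1)) 2, ← Real.rpow_mul hc0.le]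
    norm_num; ring_nf
  rw [hsq]
  exact mul_le_mul_of_nonneg_left
    (Real.rpow_le_rpow_of_nonpos hv hc.1.le (by linarith)) (sq_nonneg α)

/-- vanishing of the tail term in the scaling decomposition (Lemma 4.1). -/
theorem stmt9 (γ α : ℝ) (hγ0 : 0 < γ) (hγ1 : γ < 1)
    (hα1 : γ/2 - 1/2 < α) (hα2 : α < γ/2 + 1/2) :
    Tendsto (fun x : ℝ => ∫ v in Set.Ioi x, ((1+v)^α - v^α)^2 * (v - x)^(-γ))
      atTop (nhds 0) := by
  have hp : 2 * α - 1 - γ < 0 := by linarith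
  have hγd : (0:ℝ) < 1 - γ := by linarith
  have hγd2 : (0:ℝ) < γ + 1 - 2 * α := by linarith
  set p : ℝ := 2 * α - 1 - γ with hpdef
  set C : ℝ := α ^ 2 / (1 - γ) + α ^ 2 * 2 ^ γ * 2 ^ p / (γ + 1 - 2 * α) with hCdef
  -- upper bound for x ≥ 1
  have hub : ∀ x : ℝ, 1 ≤ x →
      (∫ v in Set.Ioi x, ((1+v)^α - v^α)^2 * (v - x)^(-γ)) ≤ C * x ^ p := by
    intro x hx
    have hx0 : (0:ℝ) < x := by linarith
    have hle : x ≤ 2 * x := by linarith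
    have h2x0 : (0:ℝ) < 2 * x := by linarith
    set f : ℝ → ℝ := fun v => ((1+v)^α - v^α)^2 * (v - x)^(-γ) with hfdef
    have hmeas : Measurable f := by
      rw [hfdef]; fun_prop
    -- dominating functions
    set h1 : ℝ → ℝ := fun v => (α ^ 2 * x ^ (2*α-2)) * (v - x) ^ (-γ) with h1def
    set h2 : ℝ → ℝ := fun v => (α ^ 2 * 2 ^ γ) * v ^ (2*α-2-γ) with h2def
    -- pointwise bounds
    have hbd1 : ∀ v ∈ Set.Ioc x (2*x), f v ≤ h1 v := by
      intro v hv
      have hv0 : 0 < v := lt_trans hx0 hv.1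
      have hvx : 0 ≤ (v - x) ^ (-γ) := Real.rpow_nonneg (by linarith [hv.1.le]) _
      have := stmt9_aux_sq α (by linarith) hv0
      calc f v ≤ (α ^ 2 * v ^ (2*α-2)) * (v - x) ^ (-γ) :=
            mul_le_mul_of_nonneg_right this hvx
        _ ≤ h1 v := by
            apply mul_le_mul_of_nonneg_right _ hvx
            exact mul_le_mul_of_nonneg_left
              (Real.rpow_le_rpow_of_nonpos hx0 hv.1.le (by linarith)) (sq_nonneg α)
    have hbd2 : ∀ v ∈ Set.Ioi (2*x), f v ≤ h2 v := by
      intro v hv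
      have hv2x : 2 * x < v := hv
      have hv0 : 0 < v := lt_trans h2x0 hv2x
      have hhalf : v / 2 ≤ v - x := by linarith
      have hA : (v - x) ^ (-γ) ≤ 2 ^ γ * v ^ (-γ) := by
        have h1' : (v - x) ^ (-γ) ≤ (v / 2) ^ (-γ) :=
          Real.rpow_le_rpow_of_nonpos (by positivity) hhalf (by linarith)
        have h2' : (v / 2) ^ (-γ) = 2 ^ γ * v ^ (-γ) := by
          rw [Real.div_rpow hv0.le (by norm_num), Real.rpow_neg (by norm_num : (0:ℝ) ≤ 2),
            div_eq_mul_inv, inv_inv, mul_comm]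
        linarith [h1', h2'.le, h2'.ge]
      have hsq := stmt9_aux_sq α (by linarith) hv0
      have hvp : 0 ≤ v ^ (2*α-2) := Real.rpow_nonneg hv0.le _
      calc f v ≤ (α ^ 2 * v ^ (2*α-2)) * (v - x) ^ (-γ) :=
            mul_le_mul_of_nonneg_right hsq (Real.rpow_nonneg (by linarith) _)
        _ ≤ (α ^ 2 * v ^ (2*α-2)) * (2 ^ γ * v ^ (-γ)) :=
            mul_le_mul_of_nonneg_left hA (by positivity)
        _ = (α ^ 2 * 2 ^ γ) * (v ^ (2*α-2) * v ^ (-γ)) := by ring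
        _ = h2 v := by rw [← Real.rpow_add hv0, h2def]; beta_reduce; ring_nf
    -- nonnegativity of f on pieces
    have hf0 : ∀ v ∈ Set.Ioi x, 0 ≤ f v := by
      intro v hv
      have : (0:ℝ) ≤ (v - x) ^ (-γ) := Real.rpow_nonneg (by linarith [mem_Ioi.mp hv]) _
      positivity
    -- integrability of dominating functions
    have hint_sub : IntervalIntegrable (fun v : ℝ => (v - x) ^ (-γ)) volume x (2*x) := by
      have := (intervalIntegral.intervalIntegrable_rpow'
        (by linarith : (-1:ℝ) < -γ) (a := 0) (b := x)).comp_sub_right x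
      simpa [two_mul] using this
    have hint1 : IntegrableOn (fun v : ℝ => (v - x) ^ (-γ)) (Set.Ioc x (2*x)) volume :=
      (intervalIntegrable_iff_integrableOn_Ioc_of_le hle).mp hint_sub
    have hinth1 : IntegrableOn h1 (Set.Ioc x (2*x)) volume := hint1.const_mul _
    have hint2 : IntegrableOn (fun v : ℝ => v ^ (2*α-2-γ)) (Set.Ioi (2*x)) volume :=
      integrableOn_Ioi_rpow_of_lt (by linarith) h2x0
    have hinth2 : IntegrableOn h2 (Set.Ioi (2*x)) volume := hint2.const_mul _
    -- integrability of f on pieces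
    have hintf1 : IntegrableOn f (Set.Ioc x (2*x)) volume := by
      refine hinth1.mono' (hmeas.aestronglyMeasurable.restrict) ?_
      filter_upwards [ae_restrict_mem measurableSet_Ioc] with v hv
      rw [Real.norm_eq_abs, abs_of_nonneg (hf0 v (mem_Ioi.mpr hv.1))]
      exact hbd1 v hv
    have hintf2 : IntegrableOn f (Set.Ioi (2*x)) volume := by
      refine hinth2.mono' (hmeas.aestronglyMeasurable.restrict) ?_
      filter_upwards [ae_restrict_mem measurableSet_Ioi] with v hv
      rw [Real.norm_eq_abs, abs_of_nonneg (hf0 v (mem_Ioi.mpr (lt_trans (by linarith) hv)))]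
      exact hbd2 v hv
    -- split the integral
    have hsplit : (∫ v in Set.Ioi x, f v)
        = (∫ v in Set.Ioc x (2*x), f v) + ∫ v in Set.Ioi (2*x), f v := by
      rw [← setIntegral_union (Set.Ioc_disjoint_Ioi le_rfl) measurableSet_Ioi hintf1 hintf2,
        Set.Ioc_union_Ioi_eq_Ioi hle]
    -- bound each piece
    have hb1 : (∫ v in Set.Ioc x (2*x), f v) ≤ (α ^ 2 * x ^ (2*α-2)) * (x ^ (1-γ) / (1-γ)) := by
      have hmono := setIntegral_mono_on hintf1 hinth1 measurableSet_Ioc hbd1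
      have hval : (∫ v in Set.Ioc x (2*x), (v - x) ^ (-γ)) = x ^ (1-γ) / (1-γ) := by
        rw [← intervalIntegral.integral_of_le hle,
          intervalIntegral.integral_comp_sub_right (fun u => u ^ (-γ)) x, sub_self,
          show 2*x - x = x by ring, integral_rpow (Or.inl (by linarith)),
          Real.zero_rpow (by linarith : -γ + 1 ≠ 0), sub_zero,
          show -γ + 1 = 1 - γ by ring]
      calc (∫ v in Set.Ioc x (2*x), f v) ≤ ∫ v in Set.Ioc x (2*x), h1 v := hmono
        _ = (α ^ 2 * x ^ (2*α-2)) * ∫ v in Set.Ioc x (2*x), (v - x) ^ (-γ) := by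
            rw [h1def, MeasureTheory.integral_const_mul]
        _ = (α ^ 2 * x ^ (2*α-2)) * (x ^ (1-γ) / (1-γ)) := by rw [hval]
    have hb2 : (∫ v in Set.Ioi (2*x), f v)
        ≤ (α ^ 2 * 2 ^ γ) * ((2*x) ^ p / (γ + 1 - 2*α)) := by
      have hmono := setIntegral_mono_on hintf2 hinth2 measurableSet_Ioi hbd2
      have hval : (∫ v in Set.Ioi (2*x), v ^ (2*α-2-γ)) = (2*x) ^ p / (γ + 1 - 2*α) := by
        rw [integral_Ioi_rpow_of_lt (by linarith) h2x0,
          show 2*α-2-γ + 1 = p by rw [hpdef]; ring,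
          show γ + 1 - 2*α = -(2*α-1-γ) by ring, ← hpdef, div_neg, neg_div]
      calc (∫ v in Set.Ioi (2*x), f v) ≤ ∫ v in Set.Ioi (2*x), h2 v := hmono
        _ = (α ^ 2 * 2 ^ γ) * ∫ v in Set.Ioi (2*x), v ^ (2*α-2-γ) := by
            rw [h2def, MeasureTheory.integral_const_mul]
        _ = (α ^ 2 * 2 ^ γ) * ((2*x) ^ p / (γ + 1 - 2*α)) := by rw [hval]
    -- combine and identify with C * x ^ p
    have hxx : x ^ (2*α-2) * x ^ (1-γ) = x ^ p := by
      rw [← Real.rpow_add hx0, hpdef]; ring_nf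
    have h2xp : (2*x) ^ p = 2 ^ p * x ^ p := Real.mul_rpow (by norm_num) hx0.le
    have hCal : (α ^ 2 * x ^ (2*α-2)) * (x ^ (1-γ) / (1-γ))
        + (α ^ 2 * 2 ^ γ) * ((2*x) ^ p / (γ + 1 - 2*α)) = C * x ^ p := by
      rw [h2xp, hCdef, ← hxx]
      field_simp
    calc (∫ v in Set.Ioi x, f v)
        = (∫ v in Set.Ioc x (2*x), f v) + ∫ v in Set.Ioi (2*x), f v := hsplit
      _ ≤ (α ^ 2 * x ^ (2*α-2)) * (x ^ (1-γ) / (1-γ))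
          + (α ^ 2 * 2 ^ γ) * ((2*x) ^ p / (γ + 1 - 2*α)) := add_le_add hb1 hb2
      _ = C * x ^ p := hCal
  -- lower bound
  have hlb : ∀ x : ℝ, 0 ≤ ∫ v in Set.Ioi x, ((1+v)^α - v^α)^2 * (v - x)^(-γ) := by
    intro x
    apply setIntegral_nonneg measurableSet_Ioi
    intro v hv
    have : (0:ℝ) ≤ (v - x) ^ (-γ) := Real.rpow_nonneg (by linarith [mem_Ioi.mp hv]) _
    positivity
  -- squeeze
  have hC : Tendsto (fun x : ℝ => C * x ^ p) atTop (nhds 0) := by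
    have h := (tendsto_rpow_neg_atTop (by linarith : (0:ℝ) < γ + 1 - 2*α)).const_mul C
    rw [mul_zero] at h
    convert h using 2 with x
    rw [hpdef, show -(γ + 1 - 2*α) = 2*α-1-γ by ring]
  refine tendsto_of_tendsto_of_tendsto_of_le_of_le' tendsto_const_nhds hC ?_ ?_
  · exact Filter.Eventually.of_forall hlb
  · filter_upwards [eventually_ge_atTop (1:ℝ)] with x hx using hub x hx
end

section
/- Let γ ∈ (0,1) and α ∈ (γ/2 − 1/2, γ/2 + 1/2) with α ≠ 0. Then lim_{x→∞} x^{1−γ} ∫₀¹ (1−w)^{−γ} ((1+xw)^α − (xw)^α)² dw = 0. -/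
open MeasureTheory Real Set Filter

/-- Mean value theorem bound: `|(1+y)^α - y^α| ≤ |α| y^(α-1)` for `y > 0`, `α < 1`. -/
lemma aux_diff_rpow_le (α : ℝ) (hα : α < 1) {y : ℝ} (hy : 0 < y) :
    |(1 + y) ^ α - y ^ α| ≤ |α| * y ^ (α - 1) := by
  have hcont : ContinuousOn (fun t : ℝ => t ^ α) (Icc y (y + 1)) := by
    refine continuousOn_of_forall_continuousAt fun t ht => ?_
    have ht0 : (0 : ℝ) < t := lt_of_lt_of_le hy ht.1
    exact Real.continuousAt_rpow_const t α (Or.inl ht0.ne')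
  have hderiv : ∀ t ∈ Ioo y (y + 1),
      HasDerivAt (fun t : ℝ => t ^ α) (α * t ^ (α - 1)) t := fun t ht =>
    Real.hasDerivAt_rpow_const (Or.inl (lt_trans hy ht.1).ne')
  obtain ⟨c, hc, hslope⟩ := exists_hasDerivAt_eq_slope (fun t : ℝ => t ^ α)
    (fun t => α * t ^ (α - 1)) (by linarith : y < y + 1) hcont hderiv
  have hc0 : 0 < c := lt_trans hy hc.1
  have heq : (1 + y) ^ α - y ^ α = α * c ^ (α - 1) := by
    rw [hslope]
    have : y + 1 - y = 1 := by ring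
    rw [this, div_one, add_comm y 1]
  rw [heq, abs_mul]
  have h1 : |c ^ (α - 1)| = c ^ (α - 1) := abs_of_nonneg (Real.rpow_nonneg hc0.le _)
  rw [h1]
  have h2 : c ^ (α - 1) ≤ y ^ (α - 1) :=
    Real.rpow_le_rpow_of_nonpos hy hc.1.le (by linarith)
  exact mul_le_mul_of_nonneg_left h2 (abs_nonneg α)

/-- Small `y` bound: for `0 < y ≤ 1` and `α < 1`, `((1+y)^α - y^α)^2 ≤ 4 + y^(2α)`. -/
lemma aux_diff_sq_le (α : ℝ) (hα : α < 1) {y : ℝ} (hy : 0 < y) (hy1 : y ≤ 1) :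
    ((1 + y) ^ α - y ^ α) ^ 2 ≤ 4 + y ^ (2 * α) := by
  have hy2 : (0 : ℝ) ≤ y ^ (2 * α) := Real.rpow_nonneg hy.le _
  rcases le_or_gt 0 α with hα0 | hα0
  · -- 0 ≤ α < 1 : the difference lies in [-1, 2]
    have h1 : (1 + y) ^ α ≤ 2 := by
      calc (1 + y) ^ α ≤ (2 : ℝ) ^ α :=
            Real.rpow_le_rpow (by linarith) (by linarith) hα0
        _ ≤ (2 : ℝ) ^ (1 : ℝ) :=
            Real.rpow_le_rpow_of_exponent_le one_le_two hα.le
        _ = 2 := by rw [Real.rpow_one]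
    have h2 : y ^ α ≤ 1 := Real.rpow_le_one hy.le hy1 hα0
    have h3 : (0 : ℝ) ≤ (1 + y) ^ α := Real.rpow_nonneg (by linarith) _
    have h4 : (0 : ℝ) ≤ y ^ α := Real.rpow_nonneg hy.le _
    nlinarith [sq_nonneg ((1 + y) ^ α - y ^ α)]
  · -- α < 0 : the difference lies in [-y^α, 0]
    have h1 : (1 + y) ^ α ≤ y ^ α :=
      Real.rpow_le_rpow_of_nonpos hy (by linarith) hα0.le
    have h3 : (0 : ℝ) ≤ (1 + y) ^ α := Real.rpow_nonneg (by linarith) _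
    have hsq : ((1 + y) ^ α - y ^ α) ^ 2 ≤ (y ^ α) ^ 2 := by
      apply sq_le_sq'
      · nlinarith [Real.rpow_nonneg hy.le α]
      · nlinarith [Real.rpow_nonneg hy.le α]
    have heq : (y ^ α) ^ 2 = y ^ (2 * α) := by
      rw [sq, ← Real.rpow_add hy]; ring_nf
    linarith [hsq, heq ▸ hsq]

/-- Integrability of the beta-type integrand on `(0,1)`. -/
lemma aux_beta_integrable (p q : ℝ) (hp : -1 < p) (hq : -1 < q) :
    IntegrableOn (fun w : ℝ => w ^ p * (1 - w) ^ q) (Ioo 0 1) := by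
  have hmeas : Measurable fun w : ℝ => w ^ p * (1 - w) ^ q := by fun_prop
  have h1 : IntegrableOn (fun w : ℝ => w ^ p * (1 - w) ^ q) (Ioc 0 (1/2)) := by
    have hi : IntegrableOn (fun w : ℝ => w ^ p) (Ioc 0 (1/2)) := by
      have := intervalIntegral.intervalIntegrable_rpow' (a := 0) (b := 1/2) hp
      rwa [intervalIntegrable_iff_integrableOn_Ioc_of_le (by norm_num)] at this
    refine Integrable.mono' (hi.const_mul (1 + (2:ℝ) ^ (-q)))
      hmeas.aestronglyMeasurable ?_
    rw [ae_restrict_iff' measurableSet_Ioc]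
    refine Eventually.of_forall fun w hw => ?_
    have hw0 : 0 < w := hw.1
    have hw1 : w ≤ 1/2 := hw.2
    have h1w : (1:ℝ)/2 ≤ 1 - w := by linarith
    have hbound : (1 - w) ^ q ≤ 1 + (2:ℝ) ^ (-q) := by
      rcases le_or_gt 0 q with hq0 | hq0
      · have := Real.rpow_le_one (by linarith : (0:ℝ) ≤ 1 - w) (by linarith) hq0
        have h2 : (0:ℝ) ≤ (2:ℝ) ^ (-q) := Real.rpow_nonneg (by norm_num) _
        linarith
      · have h2 : (1 - w) ^ q ≤ ((1:ℝ)/2) ^ q :=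
          Real.rpow_le_rpow_of_nonpos (by norm_num) h1w hq0.le
        have h3 : ((1:ℝ)/2) ^ q = (2:ℝ) ^ (-q) := by
          rw [one_div, Real.inv_rpow (by norm_num), ← Real.rpow_neg (by norm_num)]
        linarith [h3 ▸ h2]
    have hwp : (0:ℝ) ≤ w ^ p := Real.rpow_nonneg hw0.le _
    have hq1 : (0:ℝ) ≤ (1 - w) ^ q := Real.rpow_nonneg (by linarith) _
    rw [Real.norm_eq_abs, abs_of_nonneg (mul_nonneg hwp hq1)]
    calc w ^ p * (1 - w) ^ q ≤ w ^ p * (1 + (2:ℝ) ^ (-q)) :=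
          mul_le_mul_of_nonneg_left hbound hwp
      _ = (1 + (2:ℝ) ^ (-q)) * w ^ p := by ring
  have h2 : IntegrableOn (fun w : ℝ => w ^ p * (1 - w) ^ q) (Ioc (1/2) 1) := by
    have hi : IntegrableOn (fun w : ℝ => (1 - w) ^ q) (Ioc (1/2) 1) := by
      have h0 := intervalIntegral.intervalIntegrable_rpow' (a := 0) (b := 1/2) hq
      have h1' := h0.comp_sub_left 1
      have h2' : IntervalIntegrable (fun w : ℝ => (1 - w) ^ q) volume (1/2) 1 := by
        have : (1:ℝ) - 0 = 1 := by norm_num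
        have h3' : (1:ℝ) - 1/2 = 1/2 := by norm_num
        rw [this, h3'] at h1'
        exact h1'.symm
      rwa [intervalIntegrable_iff_integrableOn_Ioc_of_le (by norm_num)] at h2'
    refine Integrable.mono' (hi.const_mul (1 + (2:ℝ) ^ (-p)))
      hmeas.aestronglyMeasurable ?_
    rw [ae_restrict_iff' measurableSet_Ioc]
    refine Eventually.of_forall fun w hw => ?_
    have hw0 : (1:ℝ)/2 < w := hw.1
    have hw1 : w ≤ 1 := hw.2
    have hbound : w ^ p ≤ 1 + (2:ℝ) ^ (-p) := by
      rcases le_or_gt 0 p with hp0 | hp0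
      · have := Real.rpow_le_one (by linarith : (0:ℝ) ≤ w) hw1 hp0
        have h2 : (0:ℝ) ≤ (2:ℝ) ^ (-p) := Real.rpow_nonneg (by norm_num) _
        linarith
      · have h2 : w ^ p ≤ ((1:ℝ)/2) ^ p :=
          Real.rpow_le_rpow_of_nonpos (by norm_num) hw0.le hp0.le
        have h3 : ((1:ℝ)/2) ^ p = (2:ℝ) ^ (-p) := by
          rw [one_div, Real.inv_rpow (by norm_num), ← Real.rpow_neg (by norm_num)]
        linarith [h3 ▸ h2]
    have hwp : (0:ℝ) ≤ w ^ p := Real.rpow_nonneg (by linarith) _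
    have hq1 : (0:ℝ) ≤ (1 - w) ^ q := Real.rpow_nonneg (by linarith) _
    rw [Real.norm_eq_abs, abs_of_nonneg (mul_nonneg hwp hq1)]
    calc w ^ p * (1 - w) ^ q ≤ (1 + (2:ℝ) ^ (-p)) * (1 - w) ^ q :=
          mul_le_mul_of_nonneg_right hbound hq1
      _ = (1 + (2:ℝ) ^ (-p)) * (1 - w) ^ q := rfl
  have hsub : Ioo (0:ℝ) 1 ⊆ Ioc 0 (1/2) ∪ Ioc (1/2) 1 := by
    intro w hw
    rcases le_or_gt w (1/2) with h | h
    · exact Or.inl ⟨hw.1, h⟩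
    · exact Or.inr ⟨h, hw.2.le⟩
  exact (h1.union h2).mono_set hsub

/-- vanishing of the middle term in the scaling decomposition (Lemma 4.1). -/
theorem stmt10 (γ α : ℝ) (hγ0 : 0 < γ) (hγ1 : γ < 1)
    (hα1 : γ/2 - 1/2 < α) (hα2 : α < γ/2 + 1/2) (hα0 : α ≠ 0) :
    Tendsto (fun x : ℝ =>
        x^(1-γ) * ∫ w in Set.Ioo (0:ℝ) 1, (1-w)^(-γ) * ((1+x*w)^α - (x*w)^α)^2)
      atTop (nhds 0) := by
  have hαlt1 : α < 1 := by linarith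
  set F : ℝ → ℝ → ℝ :=
    fun x w => x^(1-γ) * ((1-w)^(-γ) * ((1+x*w)^α - (x*w)^α)^2) with hF
  set C : ℝ := α^2 + 5 with hCdef
  have hC5 : (5:ℝ) ≤ C := by nlinarith [sq_nonneg α]
  set g : ℝ → ℝ :=
    fun w => C * (w^(γ-1) * (1-w)^(-γ)) + C * (w^(2*α) * (1-w)^(-γ)) with hgdef
  have hg_int : Integrable g (volume.restrict (Ioo (0:ℝ) 1)) := by
    have h1 := aux_beta_integrable (γ-1) (-γ) (by linarith) (by linarith)
    have h2 := aux_beta_integrable (2*α) (-γ) (by linarith) (by linarith)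
    exact (h1.const_mul C).add (h2.const_mul C)
  have key : Tendsto (fun x : ℝ => ∫ w in Ioo (0:ℝ) 1, F x w) atTop
      (nhds (∫ _w in Ioo (0:ℝ) 1, (0:ℝ))) := by
    refine tendsto_integral_filter_of_dominated_convergence g ?_ ?_ hg_int ?_
    · refine Eventually.of_forall fun x => Measurable.aestronglyMeasurable ?_
      simp only [hF]
      fun_prop
    · filter_upwards [eventually_ge_atTop (1:ℝ)] with x hx
      rw [ae_restrict_iff' measurableSet_Ioo]
      refine Eventually.of_forall fun w hw => ?_
      obtain ⟨hw0, hw1⟩ := hw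
      have hx0 : (0:ℝ) < x := lt_of_lt_of_le one_pos hx
      have h1w : (0:ℝ) < 1 - w := by linarith
      have hy : 0 < x * w := mul_pos hx0 hw0
      have hP : (0:ℝ) ≤ (1-w)^(-γ) := Real.rpow_nonneg h1w.le _
      have hA : (0:ℝ) ≤ w^(γ-1) := Real.rpow_nonneg hw0.le _
      have hB : (0:ℝ) ≤ w^(2*α) := Real.rpow_nonneg hw0.le _
      have hF0 : 0 ≤ F x w := by
        simp only [hF]
        exact mul_nonneg (Real.rpow_nonneg hx0.le _) (mul_nonneg hP (sq_nonneg _))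
      rw [Real.norm_eq_abs, abs_of_nonneg hF0]
      have h1g : 0 ≤ w^(γ-1) * (1-w)^(-γ) := mul_nonneg hA hP
      have h2g : 0 ≤ w^(2*α) * (1-w)^(-γ) := mul_nonneg hB hP
      rcases le_or_gt 1 (x*w) with hcase | hcase
      · -- far regime: use the MVT bound
        have hd : ((1+x*w)^α - (x*w)^α)^2 ≤ α^2 * (x*w)^(2*α-2) := by
          have h := aux_diff_rpow_le α hαlt1 hy
          have h2 : |(1+x*w)^α - (x*w)^α|^2 ≤ (|α| * (x*w)^(α-1))^2 :=
            pow_le_pow_left₀ (abs_nonneg _) h 2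
          rw [sq_abs] at h2
          calc ((1+x*w)^α - (x*w)^α)^2 ≤ (|α| * (x*w)^(α-1))^2 := h2
            _ = α^2 * (x*w)^(2*α-2) := by
                rw [mul_pow, sq_abs, ← Real.rpow_natCast ((x*w)^(α-1)) 2,
                  ← Real.rpow_mul hy.le]
                congr 1
                push_cast
                ring
        have hxle : x^(2*α-1-γ) ≤ w^(γ+1-2*α) := by
          have hinvw : 1/w ≤ x := by rw [div_le_iff₀ hw0]; linarith
          calc x^(2*α-1-γ) ≤ (1/w)^(2*α-1-γ) :=
                Real.rpow_le_rpow_of_nonpos (by positivity) hinvw (by linarith)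
            _ = w^(γ+1-2*α) := by
                rw [one_div, Real.inv_rpow hw0.le, ← Real.rpow_neg hw0.le]
                congr 1
                ring
        calc F x w ≤ x^(1-γ) * ((1-w)^(-γ) * (α^2 * (x*w)^(2*α-2))) := by
              simp only [hF]
              exact mul_le_mul_of_nonneg_left (mul_le_mul_of_nonneg_left hd hP)
                (Real.rpow_nonneg hx0.le _)
          _ = α^2 * ((x^(1-γ) * x^(2*α-2)) * w^(2*α-2)) * (1-w)^(-γ) := by
              rw [Real.mul_rpow hx0.le hw0.le]; ring
          _ = α^2 * (x^(2*α-1-γ) * w^(2*α-2)) * (1-w)^(-γ) := by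
              rw [← Real.rpow_add hx0]
              congr 3
              ring
          _ ≤ α^2 * (w^(γ+1-2*α) * w^(2*α-2)) * (1-w)^(-γ) := by
              refine mul_le_mul_of_nonneg_right ?_ hP
              refine mul_le_mul_of_nonneg_left ?_ (sq_nonneg α)
              exact mul_le_mul_of_nonneg_right hxle (Real.rpow_nonneg hw0.le _)
          _ = α^2 * (w^(γ-1) * (1-w)^(-γ)) := by
              rw [← Real.rpow_add hw0]
              have : γ+1-2*α + (2*α-2) = γ - 1 := by ring
              rw [this]; ring
          _ ≤ g w := by
              simp only [hgdef]
              nlinarith [sq_nonneg α]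
      · -- near regime: use the small-y bound
        have hd := aux_diff_sq_le α hαlt1 hy hcase.le
        have hxinv : x ≤ 1/w := by rw [le_div_iff₀ hw0]; linarith
        have hx1γ : x^(1-γ) ≤ w^(γ-1) := by
          calc x^(1-γ) ≤ (1/w)^(1-γ) := Real.rpow_le_rpow hx0.le hxinv (by linarith)
            _ = w^(γ-1) := by
                rw [one_div, Real.inv_rpow hw0.le, ← Real.rpow_neg hw0.le]
                congr 1
                ring
        have hT2 : x^(1-γ) * (x*w)^(2*α) ≤ w^(γ-1) + w^(2*α) := by
          have hsplit : x^(1-γ) * (x*w)^(2*α) = x^(1-γ+2*α) * w^(2*α) := by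
            rw [Real.mul_rpow hx0.le hw0.le, ← mul_assoc, ← Real.rpow_add hx0]
          rw [hsplit]
          rcases le_or_gt 0 (1-γ+2*α) with he | he
          · have h := Real.rpow_le_rpow hx0.le hxinv he
            have h2 : (1/w)^(1-γ+2*α) = w^(γ-1-2*α) := by
              rw [one_div, Real.inv_rpow hw0.le, ← Real.rpow_neg hw0.le]
              congr 1
              ring
            calc x^(1-γ+2*α) * w^(2*α) ≤ w^(γ-1-2*α) * w^(2*α) :=
                  mul_le_mul_of_nonneg_right (h2 ▸ h) hB
              _ = w^(γ-1) := by
                  rw [← Real.rpow_add hw0]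
                  congr 1
                  ring
              _ ≤ w^(γ-1) + w^(2*α) := by linarith
          · have h := Real.rpow_le_one_of_one_le_of_nonpos hx he.le
            calc x^(1-γ+2*α) * w^(2*α) ≤ 1 * w^(2*α) :=
                  mul_le_mul_of_nonneg_right h hB
              _ = w^(2*α) := one_mul _
              _ ≤ w^(γ-1) + w^(2*α) := by linarith
        calc F x w ≤ x^(1-γ) * ((1-w)^(-γ) * (4 + (x*w)^(2*α))) := by
              simp only [hF]
              exact mul_le_mul_of_nonneg_left (mul_le_mul_of_nonneg_left hd hP)
                (Real.rpow_nonneg hx0.le _)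
          _ = 4 * (x^(1-γ) * (1-w)^(-γ)) + (x^(1-γ) * (x*w)^(2*α)) * (1-w)^(-γ) := by
              ring
          _ ≤ 4 * (w^(γ-1) * (1-w)^(-γ)) + (w^(γ-1) + w^(2*α)) * (1-w)^(-γ) := by
              have t1 : x^(1-γ) * (1-w)^(-γ) ≤ w^(γ-1) * (1-w)^(-γ) :=
                mul_le_mul_of_nonneg_right hx1γ hP
              have t2 : (x^(1-γ) * (x*w)^(2*α)) * (1-w)^(-γ)
                  ≤ (w^(γ-1) + w^(2*α)) * (1-w)^(-γ) :=
                mul_le_mul_of_nonneg_right hT2 hP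
              linarith
          _ ≤ g w := by
              simp only [hgdef]
              nlinarith [sq_nonneg α]
    · rw [ae_restrict_iff' measurableSet_Ioo]
      refine Eventually.of_forall fun w hw => ?_
      obtain ⟨hw0, hw1⟩ := hw
      have h1w : (0:ℝ) < 1 - w := by linarith
      have hP : (0:ℝ) ≤ (1-w)^(-γ) := Real.rpow_nonneg h1w.le _
      have hlim : Tendsto
          (fun x : ℝ => (α^2 * (w^(2*α-2) * (1-w)^(-γ))) * x^(-(γ+1-2*α)))
          atTop (nhds 0) := by
        have h := (tendsto_rpow_neg_atTop (by linarith : 0 < γ+1-2*α)).const_mul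
          (α^2 * (w^(2*α-2) * (1-w)^(-γ)))
        simpa using h
      apply squeeze_zero' ?_ ?_ hlim
      · filter_upwards [eventually_gt_atTop (0:ℝ)] with x hx0
        simp only [hF]
        exact mul_nonneg (Real.rpow_nonneg hx0.le _) (mul_nonneg hP (sq_nonneg _))
      · filter_upwards [eventually_gt_atTop (0:ℝ)] with x hx0
        have hy : 0 < x * w := mul_pos hx0 hw0
        have hd : ((1+x*w)^α - (x*w)^α)^2 ≤ α^2 * (x*w)^(2*α-2) := by
          have h := aux_diff_rpow_le α hαlt1 hy
          have h2 : |(1+x*w)^α - (x*w)^α|^2 ≤ (|α| * (x*w)^(α-1))^2 :=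
            pow_le_pow_left₀ (abs_nonneg _) h 2
          rw [sq_abs] at h2
          calc ((1+x*w)^α - (x*w)^α)^2 ≤ (|α| * (x*w)^(α-1))^2 := h2
            _ = α^2 * (x*w)^(2*α-2) := by
                rw [mul_pow, sq_abs, ← Real.rpow_natCast ((x*w)^(α-1)) 2,
                  ← Real.rpow_mul hy.le]
                congr 1
                push_cast
                ring
        calc F x w ≤ x^(1-γ) * ((1-w)^(-γ) * (α^2 * (x*w)^(2*α-2))) := by
              simp only [hF]
              exact mul_le_mul_of_nonneg_left (mul_le_mul_of_nonneg_left hd hP)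
                (Real.rpow_nonneg hx0.le _)
          _ = α^2 * (w^(2*α-2) * (1-w)^(-γ)) * (x^(1-γ) * x^(2*α-2)) := by
              rw [Real.mul_rpow hx0.le hw0.le]; ring
          _ = α^2 * (w^(2*α-2) * (1-w)^(-γ)) * x^(-(γ+1-2*α)) := by
              rw [← Real.rpow_add hx0]
              congr 2
              ring
  have hzero : (∫ _w in Ioo (0:ℝ) 1, (0:ℝ)) = 0 := by simp
  rw [hzero] at key
  have heq : (fun x : ℝ => x^(1-γ) *
      ∫ w in Set.Ioo (0:ℝ) 1, (1-w)^(-γ) * ((1+x*w)^α - (x*w)^α)^2)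
      = fun x => ∫ w in Ioo (0:ℝ) 1, F x w := by
    funext x
    simp only [hF]
    exact (MeasureTheory.integral_const_mul _ _).symm
  rw [heq]
  exact key
end

section
/- Let γ ∈ (0,1), (γ−1)/2 < α ≤ γ/2, and T > 0. Define the [0,∞]-valued functions f₁(u,v) := ∫₀^{u∧v} ((u∨v) − θ)^{α−1} ((u∧v) − θ)^{α−1} θ^{−γ} dθ and f₂(u,v) := ∫₀^∞ (u+θ)^{α−1} (v+θ)^{α−1} θ^{−γ} dθ for u,v > 0 (as Lebesgue integrals of nonnegative functions, with value +∞ allowed), and set K(u,v) := f₁(u,v) + f₂(u,v). Then K is not square integrable on (0,T) × (0,T): the (lower Lebesgue) integral ∫₀^T ∫₀^T K(u,v)² du dv = +∞. -/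
open MeasureTheory Real Set Filter

/-- in the region `(γ-1)/2 < α ≤ γ/2`, the second mixed partial derivative
`K(u,v) = f₁(u,v) + f₂(u,v)` of the covariance of the GFBM is not square integrable on
`(0,T)²`. -/
theorem stmt11 (γ α T : ℝ) (hγ0 : 0 < γ) (hγ1 : γ < 1)
    (hα1 : (γ-1)/2 < α) (hα2 : α ≤ γ/2) (hT : 0 < T) :
    (∫⁻ v in Set.Ioo (0:ℝ) T, ∫⁻ u in Set.Ioo (0:ℝ) T,
      ((∫⁻ θ in Set.Ioo (0:ℝ) (min u v),
          ENNReal.ofReal ((max u v - θ)^(α-1) * (min u v - θ)^(α-1) * θ^(-γ))) +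
        (∫⁻ θ in Set.Ioi (0:ℝ),
          ENNReal.ofReal ((u+θ)^(α-1) * (v+θ)^(α-1) * θ^(-γ))))^2) = ⊤ := by
  set c : ℝ := 3 ^ (2*(α-1)) * 2 ^ (-γ) with hc
  have hcpos : 0 < c := mul_pos (rpow_pos_of_pos (by norm_num) _) (rpow_pos_of_pos (by norm_num) _)
  have hαlt : α - 1 ≤ 0 := by nlinarith
  -- Step A : pointwise lower bound for K(u,v) when 0 < u < v
  have hA : ∀ u v : ℝ, 0 < u → u < v →
      ENNReal.ofReal (c * v ^ (2*α-1-γ)) ≤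
        (∫⁻ θ in Set.Ioo (0:ℝ) (min u v),
          ENNReal.ofReal ((max u v - θ)^(α-1) * (min u v - θ)^(α-1) * θ^(-γ))) +
        (∫⁻ θ in Set.Ioi (0:ℝ),
          ENNReal.ofReal ((u+θ)^(α-1) * (v+θ)^(α-1) * θ^(-γ))) := by
    intro u v hu huv
    have hv : 0 < v := hu.trans huv
    have key : ENNReal.ofReal (c * v ^ (2*α-1-γ)) ≤
        ∫⁻ θ in Set.Ioi (0:ℝ), ENNReal.ofReal ((u+θ)^(α-1) * (v+θ)^(α-1) * θ^(-γ)) := by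
      have h1 : ENNReal.ofReal (c * v ^ (2*α-1-γ)) =
          ∫⁻ θ in Set.Ioo v (2*v),
            ENNReal.ofReal ((3*v)^(α-1) * (3*v)^(α-1) * (2*v)^(-γ)) := by
        rw [setLIntegral_const, Real.volume_Ioo,
          ← ENNReal.ofReal_mul (by positivity)]
        congr 1
        have e3 : (3*v:ℝ)^(α-1) = 3^(α-1) * v^(α-1) := mul_rpow (by norm_num) hv.le
        have e2 : (2*v:ℝ)^(-γ) = 2^(-γ) * v^(-γ) := mul_rpow (by norm_num) hv.le
        have e1 : (3:ℝ)^(2*(α-1)) = 3^(α-1) * 3^(α-1) := by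
          rw [← Real.rpow_add (by norm_num)]; ring_nf
        have e4 : v^(α-1) * v^(α-1) * v^(-γ) * v^(1:ℝ) = v^(2*α-1-γ) := by
          rw [← Real.rpow_add hv, ← Real.rpow_add hv, ← Real.rpow_add hv]
          congr 1; ring
        have e5 : v^(1:ℝ) = v := Real.rpow_one v
        rw [hc, e3, e2, e1]
        rw [e5] at e4
        rw [← e4]; ring
      rw [h1]
      have h2 : (∫⁻ θ in Set.Ioo v (2*v),
            ENNReal.ofReal ((3*v)^(α-1) * (3*v)^(α-1) * (2*v)^(-γ))) ≤
          ∫⁻ θ in Set.Ioo v (2*v),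
            ENNReal.ofReal ((u+θ)^(α-1) * (v+θ)^(α-1) * θ^(-γ)) := by
        refine setLIntegral_mono' measurableSet_Ioo fun θ hθ => ENNReal.ofReal_le_ofReal ?_
        obtain ⟨hθ1, hθ2⟩ := hθ
        have hθ0 : 0 < θ := hv.trans hθ1
        have b1 : (3*v:ℝ)^(α-1) ≤ (u+θ)^(α-1) :=
          rpow_le_rpow_of_nonpos (by linarith) (by linarith) hαlt
        have b2 : (3*v:ℝ)^(α-1) ≤ (v+θ)^(α-1) :=
          rpow_le_rpow_of_nonpos (by linarith) (by linarith) hαlt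
        have b3 : (2*v:ℝ)^(-γ) ≤ θ^(-γ) :=
          rpow_le_rpow_of_nonpos hθ0 (by linarith) (by linarith)
        have h12 := mul_le_mul b1 b2 (rpow_nonneg (by linarith) _) (rpow_nonneg (by linarith) _)
        exact mul_le_mul h12 b3 (rpow_nonneg (by linarith) _)
          (mul_nonneg (rpow_nonneg (by linarith) _) (rpow_nonneg (by linarith) _))
      exact h2.trans (lintegral_mono_set fun θ hθ => lt_trans hv hθ.1)
    exact key.trans le_add_self
  -- Step B : lower bound for inner integral
  have hB : ∀ v ∈ Set.Ioo (0:ℝ) T,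
      ENNReal.ofReal (c^2 * v ^ (4*α-1-2*γ)) ≤
        ∫⁻ u in Set.Ioo (0:ℝ) T,
          ((∫⁻ θ in Set.Ioo (0:ℝ) (min u v),
              ENNReal.ofReal ((max u v - θ)^(α-1) * (min u v - θ)^(α-1) * θ^(-γ))) +
            (∫⁻ θ in Set.Ioi (0:ℝ),
              ENNReal.ofReal ((u+θ)^(α-1) * (v+θ)^(α-1) * θ^(-γ))))^2 := by
    intro v hv
    have hv0 := hv.1
    have step1 : ENNReal.ofReal (c^2 * v ^ (4*α-1-2*γ)) =
        ∫⁻ _ in Set.Ioo (0:ℝ) v, (ENNReal.ofReal (c * v ^ (2*α-1-γ)))^2 := by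
      rw [setLIntegral_const, Real.volume_Ioo, sub_zero,
        ← ENNReal.ofReal_pow (by positivity), ← ENNReal.ofReal_mul (by positivity)]
      congr 1
      have e4 : v^(2*α-1-γ) * v^(2*α-1-γ) * v^(1:ℝ) = v^(4*α-1-2*γ) := by
        rw [← Real.rpow_add hv0, ← Real.rpow_add hv0]
        congr 1; ring
      have e5 : v^(1:ℝ) = v := Real.rpow_one v
      rw [e5] at e4
      rw [← e4]; ring
    rw [step1]
    have step2 : (∫⁻ _ in Set.Ioo (0:ℝ) v, (ENNReal.ofReal (c * v ^ (2*α-1-γ)))^2) ≤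
        ∫⁻ u in Set.Ioo (0:ℝ) v,
          ((∫⁻ θ in Set.Ioo (0:ℝ) (min u v),
              ENNReal.ofReal ((max u v - θ)^(α-1) * (min u v - θ)^(α-1) * θ^(-γ))) +
            (∫⁻ θ in Set.Ioi (0:ℝ),
              ENNReal.ofReal ((u+θ)^(α-1) * (v+θ)^(α-1) * θ^(-γ))))^2 := by
      refine setLIntegral_mono' measurableSet_Ioo fun u hu => ?_
      exact pow_le_pow_left₀ zero_le (hA u v hu.1 hu.2) 2
    exact step2.trans (lintegral_mono_set (Set.Ioo_subset_Ioo le_rfl hv.2.le))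
  -- Step C : the outer integral of the lower bound diverges
  have hq : (4*α-1-2*γ : ℝ) ≤ -1 := by linarith
  have hC : (∫⁻ v in Set.Ioo (0:ℝ) T, ENNReal.ofReal (c^2 * v ^ (4*α-1-2*γ))) = ⊤ := by
    by_contra h
    have hmeas : Measurable fun v : ℝ => c^2 * v ^ (4*α-1-2*γ) := by fun_prop
    have hnn : 0 ≤ᵐ[volume.restrict (Set.Ioo (0:ℝ) T)]
        fun v : ℝ => c^2 * v ^ (4*α-1-2*γ) := by
      filter_upwards [ae_restrict_mem measurableSet_Ioo] with v hv
      have := hv.1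
      positivity
    have hint : IntegrableOn (fun v : ℝ => c^2 * v ^ (4*α-1-2*γ)) (Set.Ioo (0:ℝ) T) := by
      refine ⟨hmeas.aestronglyMeasurable, ?_⟩
      rw [hasFiniteIntegral_iff_ofReal hnn]
      exact lt_top_iff_ne_top.mpr h
    have hint2 : IntegrableOn (fun v : ℝ => v ^ (4*α-1-2*γ)) (Set.Ioo (0:ℝ) T) := by
      have h2 := hint.const_mul (c^2)⁻¹
      have he : (fun x : ℝ => (c^2)⁻¹ * (c^2 * x ^ (4*α-1-2*γ))) =
          fun x : ℝ => x ^ (4*α-1-2*γ) := by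
        funext x; field_simp
      rwa [he] at h2
    rw [intervalIntegral.integrableOn_Ioo_rpow_iff hT] at hint2
    linarith
  rw [eq_top_iff, ← hC]
  exact setLIntegral_mono' measurableSet_Ioo hB
end

section
/- Let γ ∈ (0,1), 0 < α < 1, and 0 < u ≤ v. Then ∫₀^u (v−θ)^{α−1} (u−θ)^{α−1} θ^{−γ} dθ ≥ Beta(1−γ, α) · u^{α−γ} · ( v − u·(1−γ)/(α + 1 − γ) )^{α−1}, where the left-hand side is a Lebesgue integral of a nonnegative function with value in (0, ∞]. -/
open MeasureTheory Real Set Filter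

lemma bern {x p : ℝ} (hx : 0 < x) (hp : p < 0) : 1 + p*(x-1) ≤ x ^ p := by
  have h1p : (0:ℝ) < 1 - p := by linarith
  have key := Real.geom_mean_le_arith_mean2_weighted
    (w₁ := 1/(1-p)) (w₂ := (-p)/(1-p)) (p₁ := x ^ p) (p₂ := x)
    (by positivity) (by apply div_nonneg <;> linarith) (Real.rpow_nonneg hx.le p) hx.le
    (by field_simp; ring)
  have hgm : (x ^ p) ^ (1/(1-p)) * x ^ ((-p)/(1-p)) = 1 := by
    rw [← Real.rpow_mul hx.le, ← Real.rpow_add hx]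
    rw [show p * (1/(1-p)) + (-p)/(1-p) = 0 by field_simp; ring, Real.rpow_zero]
  rw [hgm] at key
  have h2 : 1 - p ≤ x ^ p + (-p) * x := by
    have := mul_le_mul_of_nonneg_left key h1p.le
    field_simp at this
    linarith
  linarith

lemma tangent {t s p : ℝ} (ht : 0 < t) (hs : 0 < s) (hp : p < 0) :
    t ^ p + p * t ^ (p-1) * (s - t) ≤ s ^ p := by
  have h := bern (x := s/t) (div_pos hs ht) hp
  have htp : (0:ℝ) < t ^ p := Real.rpow_pos_of_pos ht p
  have htp1 : t ^ (p-1) = t ^ p / t := by rw [Real.rpow_sub ht, Real.rpow_one]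
  have hne : t ≠ 0 := ht.ne'
  rw [htp1]
  calc t ^ p + p * (t ^ p / t) * (s - t) = t ^ p * (1 + p * (s/t - 1)) := by
        field_simp
    _ ≤ t ^ p * ((s/t) ^ p) := mul_le_mul_of_nonneg_left h htp.le
    _ = s ^ p := by rw [Real.div_rpow hs.le ht.le]; field_simp


lemma integrable_pow_mul {p q u : ℝ} (hp : -1 < p) (hq : -1 < q) (hu : 0 < u) :
    IntegrableOn (fun θ : ℝ => θ ^ p * (u - θ) ^ q) (Ioo 0 u) := by
  have h2 : 0 < u/2 := by linarith
  have hA : IntegrableOn (fun θ : ℝ => θ ^ p * (u - θ) ^ q) (Icc 0 (u/2)) := by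
    have hint : IntegrableOn (fun θ : ℝ => θ ^ p) (Icc 0 (u/2)) := by
      rw [integrableOn_Icc_iff_integrableOn_Ioc]
      exact (intervalIntegral.intervalIntegrable_rpow' hp (a := 0) (b := u/2)).1
    have hcont : ContinuousOn (fun θ : ℝ => (u - θ) ^ q) (Icc 0 (u/2)) := by
      apply ContinuousOn.rpow_const (by fun_prop)
      intro x hx
      left
      have := hx.2
      intro h; rw [sub_eq_zero] at h; simp [Icc] at hx; linarith [hx.2]
    exact hint.mul_continuousOn hcont isCompact_Icc
  have hB : IntegrableOn (fun θ : ℝ => θ ^ p * (u - θ) ^ q) (Icc (u/2) u) := by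
    have hint : IntegrableOn (fun θ : ℝ => (u - θ) ^ q) (Icc (u/2) u) := by
      have := ((intervalIntegral.intervalIntegrable_rpow' hq (a := 0) (b := u/2)).comp_sub_left u)
      rw [show u - u/2 = u/2 by ring, show u - 0 = u by ring] at this
      rw [integrableOn_Icc_iff_integrableOn_Ioc]
      exact this.2
    have hcont : ContinuousOn (fun θ : ℝ => θ ^ p) (Icc (u/2) u) := by
      apply ContinuousOn.rpow_const (by fun_prop)
      intro x hx
      left
      simp [Icc] at hx; intro h; rw [h] at hx; linarith [hx.1]
    have := hint.continuousOn_mul hcont isCompact_Icc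
    exact this
  have : IntegrableOn (fun θ : ℝ => θ ^ p * (u - θ) ^ q) (Icc 0 (u/2) ∪ Icc (u/2) u) :=
    hA.union hB
  apply this.mono_set
  rw [Icc_union_Icc_eq_Icc h2.le (by linarith : u/2 ≤ u)]
  exact Ioo_subset_Icc_self



lemma scaling {p q u : ℝ} (hu : 0 < u) :
    ∫ θ in Ioo 0 u, θ ^ p * (u - θ) ^ q
      = u ^ (p + q + 1) * ∫ x in Ioo (0:ℝ) 1, x ^ p * (1 - x) ^ q := by
  have h1 : (∫ θ in Ioo 0 u, θ ^ p * (u - θ) ^ q)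
      = ∫ θ in (0:ℝ)..u, θ ^ p * (u - θ) ^ q := by
    rw [intervalIntegral.integral_of_le hu.le, integral_Ioc_eq_integral_Ioo]
  have h2 := intervalIntegral.integral_comp_mul_left
      (fun θ => θ ^ p * (u - θ) ^ q) hu.ne' (a := 0) (b := 1)
  simp only [mul_zero, mul_one, smul_eq_mul] at h2
  have h3 : (∫ θ in (0:ℝ)..u, θ ^ p * (u - θ) ^ q)
      = u * ∫ x in (0:ℝ)..1, (u*x) ^ p * (u - u*x) ^ q := by
    rw [h2]; field_simp
  rw [h1, h3, intervalIntegral.integral_of_le (by norm_num : (0:ℝ) ≤ 1),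
    integral_Ioc_eq_integral_Ioo]
  rw [setIntegral_congr_fun measurableSet_Ioo (g := fun x =>
    (u ^ p * u ^ q) * (x ^ p * (1 - x) ^ q)) ?_]
  · rw [integral_const_mul]
    rw [show u ^ (p+q+1) = u * (u ^ p * u ^ q) by
      rw [Real.rpow_add hu, Real.rpow_add hu, Real.rpow_one]; ring]
    ring
  · intro x hx
    obtain ⟨hx0, hx1⟩ := hx
    have h1x : 0 ≤ 1 - x := by linarith
    simp only
    rw [Real.mul_rpow hu.le hx0.le, show u - u * x = u * (1 - x) by ring,
      Real.mul_rpow hu.le h1x]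
    ring



lemma beta_ofReal {a b : ℝ} (ha : 0 < a) (hb : 0 < b) :
    Complex.betaIntegral a b = (Beta a b : ℂ) := by
  rw [Complex.betaIntegral, Beta,
    intervalIntegral.integral_of_le (by norm_num : (0:ℝ) ≤ 1),
    integral_Ioc_eq_integral_Ioo]
  rw [setIntegral_congr_fun measurableSet_Ioo (g := fun x : ℝ =>
    ((x ^ (a-1) * (1-x) ^ (b-1) : ℝ) : ℂ)) ?_]
  · exact integral_ofReal
  · intro x hx
    obtain ⟨hx0, hx1⟩ := hx
    have h1x : (0:ℝ) ≤ 1 - x := by linarith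
    dsimp only
    rw [show ((1:ℂ) - x) = ((1-x:ℝ):ℂ) by push_cast; ring,
      show ((a:ℂ) - 1) = ((a-1:ℝ):ℂ) by push_cast; ring,
      show ((b:ℂ) - 1) = ((b-1:ℝ):ℂ) by push_cast; ring,
      ← Complex.ofReal_cpow hx0.le, ← Complex.ofReal_cpow h1x]
    push_cast
    ring
lemma beta_rec {a b : ℝ} (ha : 0 < a) (hb : 0 < b) :
    (a + b) * Beta (a+1) b = a * Beta a b := by
  have hare : 0 < Complex.re a := by simpa using ha
  have hbre : 0 < Complex.re b := by simpa using hb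
  have ha1re : 0 < Complex.re ((a:ℂ)+1) := by simp; linarith
  have h1 := Complex.Gamma_mul_Gamma_eq_betaIntegral hare hbre
  have h2 := Complex.Gamma_mul_Gamma_eq_betaIntegral ha1re hbre
  have hGa : Complex.Gamma ((a:ℂ)+1) = a * Complex.Gamma a :=
    Complex.Gamma_add_one _ (by simpa using ha.ne')
  have hGab : Complex.Gamma ((a:ℂ)+1+b) = ((a:ℂ)+b) * Complex.Gamma (a+b) := by
    rw [show ((a:ℂ)+1+b) = ((a:ℂ)+b)+1 by ring]
    exact Complex.Gamma_add_one _ (by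
      intro h
      have : Complex.re ((a:ℂ)+b) = 0 := by rw [h]; simp
      simp at this; linarith)
  have hne : Complex.Gamma ((a:ℂ)+b) ≠ 0 :=
    Complex.Gamma_ne_zero_of_re_pos (by simp; linarith)
  -- a * Γa * Γb = (a+b) Γ(a+b) β(a+1,b)
  rw [hGa, hGab] at h2
  -- h1 : Γa Γb = Γ(a+b) β(a,b)
  have key : ((a:ℂ)+b) * Complex.betaIntegral ((a:ℂ)+1) b
      = (a:ℂ) * Complex.betaIntegral a b := by
    have h3 : Complex.Gamma ((a:ℂ)+b) * (((a:ℂ)+b) * Complex.betaIntegral ((a:ℂ)+1) b)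
        = Complex.Gamma ((a:ℂ)+b) * ((a:ℂ) * Complex.betaIntegral a b) := by
      linear_combination (a:ℂ) * h1 - h2
    exact mul_left_cancel₀ hne h3
  rw [show ((a:ℂ)+1) = ((a+1:ℝ):ℂ) by push_cast; ring] at key
  rw [beta_ofReal (by linarith) hb, beta_ofReal ha hb] at key
  have : (((a+b) * Beta (a+1) b : ℝ) : ℂ) = ((a * Beta a b : ℝ) : ℂ) := by
    push_cast; linear_combination key
  exact_mod_cast this








lemma ofReal_max (x : ℝ) : ENNReal.ofReal (max x 0) = ENNReal.ofReal x := by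
  rcases le_total x 0 with h|h
  · simp [ENNReal.ofReal_of_nonpos h, max_eq_right h]
  · simp [max_eq_left h]

/-- Jensen lower bound for `f₁(u,v)` (proof of Lemma 5.1). -/
theorem stmt12 (γ α u v : ℝ) (hγ0 : 0 < γ) (hγ1 : γ < 1) (hα0 : 0 < α) (hα1 : α < 1)
    (hu : 0 < u) (huv : u ≤ v) :
    ENNReal.ofReal (Beta (1-γ) α * u^(α-γ) * (v - u*(1-γ)/(α+1-γ))^(α-1)) ≤
      ∫⁻ θ in Set.Ioo (0:ℝ) u,
        ENNReal.ofReal ((v-θ)^(α-1) * (u-θ)^(α-1) * θ^(-γ)) := by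
  have hαγ : 0 < α + 1 - γ := by linarith
  set θ₀ : ℝ := u*(1-γ)/(α+1-γ) with hθ₀def
  have hθ₀pos : 0 < θ₀ := by
    apply div_pos (by nlinarith) hαγ
  have hθ₀u : θ₀ < u := by
    rw [hθ₀def, div_lt_iff₀ hαγ]; nlinarith
  have hθ₀v : θ₀ < v := lt_of_lt_of_le hθ₀u huv
  have hvθ₀ : 0 < v - θ₀ := by linarith
  set c : ℝ := (v - θ₀) ^ (α-1) with hcdef
  set D : ℝ := (α-1) * (v - θ₀) ^ (α-2) with hDdef
  set h : ℝ → ℝ := fun θ => (c + D*(θ₀-θ)) * ((u-θ) ^ (α-1) * θ ^ (-γ)) with hdef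
  -- pointwise tangent bound
  have hpoint : ∀ θ ∈ Ioo (0:ℝ) u,
      h θ ≤ (v-θ) ^ (α-1) * (u-θ) ^ (α-1) * θ ^ (-γ) := by
    intro θ hθ
    obtain ⟨hθ0, hθu⟩ := hθ
    have hvθ : 0 < v - θ := by linarith
    have htan := tangent hvθ₀ hvθ (by linarith : α - 1 < 0)
    rw [show α - 1 - 1 = α - 2 by ring, show v - θ - (v - θ₀) = θ₀ - θ by ring] at htan
    have hnn : 0 ≤ (u-θ) ^ (α-1) * θ ^ (-γ) :=
      mul_nonneg (Real.rpow_nonneg (by linarith) _) (Real.rpow_nonneg hθ0.le _)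
    have hkey : c + D*(θ₀-θ) ≤ (v-θ) ^ (α-1) := by
      rw [hcdef, hDdef]; linarith [htan]
    calc h θ ≤ (v-θ) ^ (α-1) * ((u-θ) ^ (α-1) * θ ^ (-γ)) := by
          rw [hdef]; exact mul_le_mul_of_nonneg_right hkey hnn
      _ = (v-θ) ^ (α-1) * (u-θ) ^ (α-1) * θ ^ (-γ) := by ring
  -- integrability
  have hf₀ : IntegrableOn (fun θ : ℝ => θ ^ (-γ) * (u-θ) ^ (α-1)) (Ioo 0 u) :=
    integrable_pow_mul (by linarith) (by linarith) hu
  have hf₁ : IntegrableOn (fun θ : ℝ => θ ^ (1-γ) * (u-θ) ^ (α-1)) (Ioo 0 u) :=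
    integrable_pow_mul (by linarith) (by linarith) hu
  have hae : (fun θ : ℝ => (c + D*θ₀) * (θ ^ (-γ) * (u-θ) ^ (α-1))
        - D * (θ ^ (1-γ) * (u-θ) ^ (α-1)))
      =ᵐ[volume.restrict (Ioo 0 u)] h := by
    refine ae_restrict_of_forall_mem measurableSet_Ioo (fun θ hθ => ?_)
    obtain ⟨hθ0, hθu⟩ := hθ
    have hsplit : θ ^ (1-γ) = θ * θ ^ (-γ) := by
      rw [show (1:ℝ)-γ = 1 + (-γ) by ring, Real.rpow_add hθ0, Real.rpow_one]
    rw [hdef]; dsimp only; rw [hsplit]; ring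
  have hcomb : Integrable (fun θ : ℝ => (c + D*θ₀) * (θ ^ (-γ) * (u-θ) ^ (α-1))
        - D * (θ ^ (1-γ) * (u-θ) ^ (α-1))) (volume.restrict (Ioo 0 u)) :=
    (hf₀.const_mul _).sub (hf₁.const_mul _)
  have hInt : Integrable h (volume.restrict (Ioo 0 u)) := hcomb.congr hae
  -- value of the integral
  have hI₀ : ∫ θ in Ioo 0 u, θ ^ (-γ) * (u-θ) ^ (α-1)
      = u ^ (α-γ) * Beta (1-γ) α := by
    rw [scaling hu, show -γ + (α-1) + 1 = α - γ by ring]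
    congr 1
    rw [Beta, show (1:ℝ)-γ-1 = -γ by ring]
  have hI₁ : ∫ θ in Ioo 0 u, θ ^ (1-γ) * (u-θ) ^ (α-1)
      = u ^ (α-γ) * u * Beta (2-γ) α := by
    rw [scaling hu, show 1-γ + (α-1) + 1 = (α-γ) + 1 by ring,
      Real.rpow_add_one hu.ne' (α-γ)]
    congr 1
    rw [Beta, show (2:ℝ)-γ-1 = 1-γ by ring]
  have hrec : (α+1-γ) * Beta (2-γ) α = (1-γ) * Beta (1-γ) α := by
    have := beta_rec (a := 1-γ) (b := α) (by linarith) hα0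
    rw [show (1:ℝ)-γ+1 = 2-γ by ring, show (1:ℝ)-γ+α = α+1-γ by ring] at this
    exact this
  have hval : ∫ θ in Ioo 0 u, h θ
      = Beta (1-γ) α * u^(α-γ) * (v - u*(1-γ)/(α+1-γ))^(α-1) := by
    rw [integral_congr_ae hae.symm, integral_sub (hf₀.const_mul _) (hf₁.const_mul _),
      integral_const_mul, integral_const_mul, hI₀, hI₁]
    rw [← hθ₀def, ← hcdef]
    have hθ₀eq : θ₀ * (α+1-γ) = u * (1-γ) := by
      rw [hθ₀def]; field_simp
    apply mul_left_cancel₀ hαγ.ne'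
    linear_combination (D*u^(α-γ)*Beta (1-γ) α) * hθ₀eq - (D*u^(α-γ)*u) * hrec
  -- final chain
  calc ENNReal.ofReal (Beta (1-γ) α * u^(α-γ) * (v - u*(1-γ)/(α+1-γ))^(α-1))
      = ENNReal.ofReal (∫ θ in Ioo 0 u, h θ) := by rw [hval]
    _ ≤ ENNReal.ofReal (∫ θ in Ioo 0 u, max (h θ) 0) := by
        apply ENNReal.ofReal_le_ofReal
        exact integral_mono hInt hInt.pos_part (fun θ => le_max_left _ _)
    _ = ∫⁻ θ in Ioo 0 u, ENNReal.ofReal (max (h θ) 0) := by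
        exact ofReal_integral_eq_lintegral_ofReal hInt.pos_part
          (ae_of_all _ (fun θ => le_max_right _ _))
    _ = ∫⁻ θ in Ioo 0 u, ENNReal.ofReal (h θ) := by
        apply lintegral_congr (fun θ => ofReal_max _)
    _ ≤ ∫⁻ θ in Set.Ioo (0:ℝ) u,
        ENNReal.ofReal ((v-θ)^(α-1) * (u-θ)^(α-1) * θ^(-γ)) := by
        refine lintegral_mono_ae (ae_restrict_of_forall_mem measurableSet_Ioo
          (fun θ hθ => ENNReal.ofReal_le_ofReal (hpoint θ hθ)))
end

section
/- Let γ ∈ (0,1), 0 < α < (1+γ)/2, and u, v > 0. Then ∫₀^∞ (v+θ)^{α−1} (u+θ)^{α−1} θ^{−γ} dθ ≤ (uv)^{2α−γ−1} / (1 + γ − 2α) + (uv)^{α−γ} / (1 − γ). -/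
open MeasureTheory Real Set Filter

/-- upper bound for `f₂(u,v)` (proof of Lemma 5.1). -/
theorem stmt13 (γ α u v : ℝ) (hγ0 : 0 < γ) (hγ1 : γ < 1)
    (hα0 : 0 < α) (hα2 : α < (1+γ)/2) (hu : 0 < u) (hv : 0 < v) :
    (∫⁻ θ in Set.Ioi (0:ℝ),
        ENNReal.ofReal ((v+θ)^(α-1) * (u+θ)^(α-1) * θ^(-γ))) ≤
      ENNReal.ofReal ((u*v)^(2*α-γ-1) / (1+γ-2*α) + (u*v)^(α-γ) / (1-γ)) := by
  have hc : 0 < u * v := mul_pos hu hv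
  have hγ' : (0:ℝ) < 1 - γ := by linarith
  have h2α : (0:ℝ) < 1 + γ - 2 * α := by linarith
  have hp : 2 * α - γ - 2 < -1 := by linarith
  have hα1 : α - 1 ≤ 0 := by linarith
  rw [← Set.Ioc_union_Ioi_eq_Ioi hc.le,
    lintegral_union measurableSet_Ioi Set.Ioc_disjoint_Ioi_same]
  have h1 : (∫⁻ θ in Set.Ioc (0:ℝ) (u*v),
      ENNReal.ofReal ((v+θ)^(α-1) * (u+θ)^(α-1) * θ^(-γ)))
      ≤ ENNReal.ofReal ((u*v)^(α-γ) / (1-γ)) := by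
    have hmono : ∀ θ ∈ Set.Ioc (0:ℝ) (u*v),
        ENNReal.ofReal ((v+θ)^(α-1) * (u+θ)^(α-1) * θ^(-γ))
          ≤ ENNReal.ofReal (v^(α-1) * u^(α-1) * θ^(-γ)) := by
      intro θ hθ
      apply ENNReal.ofReal_le_ofReal
      have h1 : (v+θ)^(α-1) ≤ v^(α-1) :=
        Real.rpow_le_rpow_of_nonpos hv (by linarith [hθ.1]) hα1
      have h2 : (u+θ)^(α-1) ≤ u^(α-1) :=
        Real.rpow_le_rpow_of_nonpos hu (by linarith [hθ.1]) hα1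
      have hθγ : 0 ≤ θ^(-γ) := Real.rpow_nonneg hθ.1.le _
      have hup : 0 ≤ (u+θ)^(α-1) := Real.rpow_nonneg (by linarith [hθ.1]) _
      have hvp : 0 ≤ v^(α-1) := Real.rpow_nonneg hv.le _
      exact mul_le_mul (mul_le_mul h1 h2 hup hvp) le_rfl hθγ
        (by positivity)
    refine (setLIntegral_mono (by fun_prop) hmono).trans ?_
    have hint : IntegrableOn (fun θ : ℝ => v^(α-1) * u^(α-1) * θ^(-γ))
        (Set.Ioc 0 (u*v)) := by
      exact (intervalIntegral.intervalIntegrable_rpow'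
        (by linarith : (-1:ℝ) < -γ)).1.const_mul _
    rw [← MeasureTheory.ofReal_integral_eq_lintegral_ofReal hint
      (ae_restrict_of_forall_mem measurableSet_Ioc
        (fun θ hθ => mul_nonneg (mul_nonneg (Real.rpow_nonneg hv.le _)
          (Real.rpow_nonneg hu.le _)) (Real.rpow_nonneg hθ.1.le _)))]
    apply ENNReal.ofReal_le_ofReal
    rw [MeasureTheory.integral_const_mul, ← intervalIntegral.integral_of_le hc.le,
      integral_rpow (Or.inl (by linarith)),
      Real.zero_rpow (by linarith : -γ + 1 ≠ 0)]
    have hK : v^(α-1) * u^(α-1) = (u*v)^(α-1) := by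
      rw [Real.mul_rpow hu.le hv.le]; ring
    rw [hK, sub_zero, ← mul_div_assoc, ← Real.rpow_add hc,
      show α - 1 + (-γ + 1) = α - γ by ring, show -γ + 1 = 1 - γ by ring]
  have h2 : (∫⁻ θ in Set.Ioi (u*v),
      ENNReal.ofReal ((v+θ)^(α-1) * (u+θ)^(α-1) * θ^(-γ)))
      ≤ ENNReal.ofReal ((u*v)^(2*α-γ-1) / (1+γ-2*α)) := by
    have hmono : ∀ θ ∈ Set.Ioi (u*v),
        ENNReal.ofReal ((v+θ)^(α-1) * (u+θ)^(α-1) * θ^(-γ))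
          ≤ ENNReal.ofReal (θ^(2*α-γ-2)) := by
      intro θ hθ
      have hθ0 : 0 < θ := lt_trans hc hθ
      apply ENNReal.ofReal_le_ofReal
      have h1 : (v+θ)^(α-1) ≤ θ^(α-1) :=
        Real.rpow_le_rpow_of_nonpos hθ0 (by linarith) hα1
      have h2 : (u+θ)^(α-1) ≤ θ^(α-1) :=
        Real.rpow_le_rpow_of_nonpos hθ0 (by linarith) hα1
      have hθγ : 0 ≤ θ^(-γ) := Real.rpow_nonneg hθ0.le _
      have hup : 0 ≤ (u+θ)^(α-1) := Real.rpow_nonneg (by linarith) _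
      have hvp : 0 ≤ θ^(α-1) := Real.rpow_nonneg hθ0.le _
      calc (v+θ)^(α-1) * (u+θ)^(α-1) * θ^(-γ)
          ≤ θ^(α-1) * θ^(α-1) * θ^(-γ) :=
            mul_le_mul (mul_le_mul h1 h2 hup hvp) le_rfl hθγ (by positivity)
        _ = θ^(2*α-γ-2) := by
            rw [← Real.rpow_add hθ0, ← Real.rpow_add hθ0]; ring_nf
    refine (setLIntegral_mono (by fun_prop) hmono).trans ?_
    have hint : IntegrableOn (fun θ : ℝ => θ^(2*α-γ-2)) (Set.Ioi (u*v)) :=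
      integrableOn_Ioi_rpow_of_lt hp hc
    rw [← MeasureTheory.ofReal_integral_eq_lintegral_ofReal hint
      (ae_restrict_of_forall_mem measurableSet_Ioi
        (fun θ hθ => Real.rpow_nonneg (lt_trans hc hθ).le _))]
    apply ENNReal.ofReal_le_ofReal
    rw [integral_Ioi_rpow_of_lt hp hc,
      show 2*α-γ-2+1 = 2*α-γ-1 by ring,
      show 1+γ-2*α = -(2*α-γ-1) by ring, div_neg, neg_div]
  calc _ ≤ ENNReal.ofReal ((u*v)^(α-γ) / (1-γ)) +
        ENNReal.ofReal ((u*v)^(2*α-γ-1) / (1+γ-2*α)) := add_le_add h1 h2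
    _ = _ := by
        rw [← ENNReal.ofReal_add (by positivity)
          (div_nonneg (Real.rpow_nonneg hc.le _) h2α.le)]
        ring_nf
end

section
/- Let γ ∈ (0,1), 1/2 < α < (1+γ)/2, and t > 0. Then ∫_{−∞}^t (t−s)^{2(α−1)} |s|^{−γ} ds = t^{2α−γ−1} ( Beta(1−γ, 2α−1) + Beta(1−γ, 1+γ−2α) ). In particular, the function Ψ_t(s) := C_t^{−1} α (t−s)^{α−1} |s|^{−γ/2} for s < t (and 0 for s ≥ t), with normalizing constant C_t := α t^{(2α−γ−1)/2} ( Beta(1−γ, 2α−1) + Beta(1−γ, 1+γ−2α) )^{1/2}, satisfies ∫_ℝ Ψ_t(s)² ds = 1. -/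
open MeasureTheory Real Set Filter

lemma eq_of_log {a b : ℝ} (ha : 0 < a) (hb : 0 < b) (h : Real.log a = Real.log b) : a = b := by
  rw [← Real.exp_log ha, ← Real.exp_log hb, h]

lemma betaIntegrand_integrable {a b : ℝ} (ha : 0 < a) (hb : 0 < b) :
    IntegrableOn (fun x : ℝ => x ^ (a - 1) * (1 - x) ^ (b - 1)) (Set.Ioo 0 1) := by
  have h := Complex.betaIntegral_convergent (u := a) (v := b) (by simpa) (by simpa)
  rw [intervalIntegrable_iff_integrableOn_Ioo_of_le (by norm_num)] at h
  have h2 : IntegrableOn (fun x : ℝ =>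
      ((x:ℂ) ^ ((a:ℂ) - 1) * (1 - (x:ℂ)) ^ ((b:ℂ) - 1)).re) (Set.Ioo 0 1) := h.re
  refine IntegrableOn.congr_fun h2 (fun x hx => ?_) measurableSet_Ioo
  have e1 : ((x:ℂ) ^ ((a:ℂ) - 1) * (1 - (x:ℂ)) ^ ((b:ℂ) - 1))
      = ((x ^ (a-1) * (1-x)^(b-1) : ℝ) : ℂ) := by
    rw [Complex.ofReal_mul, Complex.ofReal_cpow hx.1.le,
      Complex.ofReal_cpow (by linarith [hx.2] : (0:ℝ) ≤ 1 - x)]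
    push_cast; ring
  rw [e1, Complex.ofReal_re]

lemma betaIntegrand_pos {a b : ℝ} (ha : 0 < a) (hb : 0 < b) :
    0 < Beta a b := by
  rw [Beta]
  refine (setIntegral_pos_iff_support_of_nonneg_ae ?_ (betaIntegrand_integrable ha hb)).2 ?_
  · filter_upwards [ae_restrict_mem measurableSet_Ioo] with x hx
    exact mul_nonneg (rpow_nonneg hx.1.le _) (rpow_nonneg (by linarith [hx.2]) _)
  · have hsub : Set.Ioo (0:ℝ) 1 ⊆
        Function.support (fun x : ℝ => x ^ (a - 1) * (1 - x) ^ (b - 1)) ∩ Set.Ioo 0 1 := by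
      intro x hx
      refine ⟨?_, hx⟩
      exact (mul_pos (rpow_pos_of_pos hx.1 _) (rpow_pos_of_pos (by linarith [hx.2]) _)).ne'
    refine lt_of_lt_of_le ?_ (measure_mono hsub)
    simp [Real.volume_Ioo]

section Main
variable {γ α t : ℝ}

lemma part1 (hγ0 : 0 < γ) (hγ1 : γ < 1) (hα1 : 1/2 < α) (hα2 : α < (1+γ)/2) (ht : 0 < t) :
    (∫ s in Set.Iio t, (t-s)^(2*(α-1)) * |s|^(-γ)) =
      t^(2*α - γ - 1) * (Beta (1-γ) (2*α-1) + Beta (1-γ) (1+γ-2*α)) := by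
  set g : ℝ → ℝ := fun s => (t-s)^(2*(α-1)) * |s|^(-γ) with hg
  -- substitution 1 : Ioo 0 t
  have himg1 : (fun x : ℝ => t * x) '' Set.Ioo 0 1 = Set.Ioo 0 t := by
    rw [show (fun x : ℝ => t * x) = (t * ·) from rfl, Set.image_mul_left_Ioo ht]; simp
  have hderiv1 : ∀ x ∈ Set.Ioo (0:ℝ) 1,
      HasDerivWithinAt (fun x : ℝ => t * x) t (Set.Ioo 0 1) x := fun x _ => by
    simpa using ((hasDerivAt_id x).const_mul t).hasDerivWithinAt
  have hinj1 : Set.InjOn (fun x : ℝ => t * x) (Set.Ioo 0 1) := fun a _ b _ h =>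
    mul_left_cancel₀ ht.ne' h
  have hpt1 : ∀ x ∈ Set.Ioo (0:ℝ) 1, |t| • g (t * x)
      = t^(2*α-γ-1) * (x ^ ((1-γ) - 1) * (1-x) ^ ((2*α-1) - 1)) := by
    intro x hx
    obtain ⟨hx0, hx1⟩ := hx
    have hu : 0 < 1 - x := by linarith
    rw [smul_eq_mul, hg]
    simp only
    rw [show t - t*x = t*(1-x) by ring, abs_of_pos ht, abs_of_pos (by positivity : 0 < t*x)]
    apply eq_of_log (by positivity) (by positivity)
    repeat rw [Real.log_mul (by positivity) (by positivity)]
    repeat rw [Real.log_rpow (by positivity)]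
    repeat rw [Real.log_mul (by positivity) (by positivity)]
    ring
  have hint1 : ∫ s in Set.Ioo 0 t, g s = t^(2*α-γ-1) * Beta (1-γ) (2*α-1) := by
    rw [← himg1, integral_image_eq_integral_abs_deriv_smul measurableSet_Ioo hderiv1 hinj1 g,
      setIntegral_congr_fun measurableSet_Ioo hpt1, integral_const_mul]
    rfl
  have hintg1 : IntegrableOn g (Set.Ioo 0 t) := by
    rw [← himg1, integrableOn_image_iff_integrableOn_abs_deriv_smul measurableSet_Ioo hderiv1 hinj1 g]
    refine IntegrableOn.congr_fun ?_ (fun x hx => (hpt1 x hx).symm) measurableSet_Ioo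
    exact ((betaIntegrand_integrable (by linarith) (by linarith)).const_mul _)
  -- substitution 2 : Iio 0
  have himg2 : (fun x : ℝ => t * x / (x-1)) '' Set.Ioo 0 1 = Set.Iio 0 := by
    ext y
    simp only [Set.mem_image, Set.mem_Ioo, Set.mem_Iio]
    constructor
    · rintro ⟨x, hx, rfl⟩
      exact div_neg_of_pos_of_neg (mul_pos ht hx.1) (by linarith [hx.2])
    · intro hy
      have hyt : y - t < 0 := by linarith
      have hyt' : y - t ≠ 0 := hyt.ne
      refine ⟨y/(y-t), ⟨div_pos_of_neg_of_neg hy hyt, ?_⟩, ?_⟩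
      · rw [div_lt_one_iff]; right; right; exact ⟨hyt, by linarith⟩
      · have h : y/(y-t) - 1 = t/(y-t) := by field_simp; ring
        rw [h]; field_simp
  have hderiv2 : ∀ x ∈ Set.Ioo (0:ℝ) 1,
      HasDerivWithinAt (fun x : ℝ => t * x / (x-1)) (-t/((x-1)^2)) (Set.Ioo 0 1) x := by
    intro x hx
    have hne : x - 1 ≠ 0 := by intro hh; rw [sub_eq_zero] at hh; linarith [hx.2]
    have h : HasDerivAt (fun x : ℝ => t * x / (x-1))
        ((t * 1 * (x - 1) - t * x * 1) / (x - 1) ^ 2) x :=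
      ((hasDerivAt_id x).const_mul t).div ((hasDerivAt_id x).sub_const 1) hne
    have e : (t * 1 * (x-1) - t * x * 1)/((x-1)^2) = -t/((x-1)^2) := by ring_nf
    rw [e] at h
    exact h.hasDerivWithinAt
  have hinj2 : Set.InjOn (fun x : ℝ => t * x / (x-1)) (Set.Ioo 0 1) := by
    intro a ha b hb h
    have ha' : a - 1 ≠ 0 := by intro hh; rw [sub_eq_zero] at hh; linarith [ha.2]
    have hb' : b - 1 ≠ 0 := by intro hh; rw [sub_eq_zero] at hh; linarith [hb.2]
    simp only at h
    field_simp at h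
    have : t * a = t * b := by nlinarith
    exact mul_left_cancel₀ ht.ne' this
  have hpt2 : ∀ x ∈ Set.Ioo (0:ℝ) 1, |(-t/((x-1)^2))| • g (t * x / (x-1))
      = t^(2*α-γ-1) * (x ^ ((1-γ) - 1) * (1-x) ^ ((1+γ-2*α) - 1)) := by
    intro x hx
    obtain ⟨hx0, hx1⟩ := hx
    have hu : 0 < 1 - x := by linarith
    have hne : x - 1 ≠ 0 := by intro hh; rw [sub_eq_zero] at hh; linarith
    rw [smul_eq_mul, hg]
    simp only
    rw [show t - t*x/(x-1) = t/(1-x) by field_simp; ring,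
        show t*x/(x-1) = -(t*x/(1-x)) by field_simp; ring,
        show -t/((x-1)^2) = -(t/(1-x)^2) by rw [show (x-1)^2 = (1-x)^2 by ring]; ring,
        abs_neg, abs_neg, abs_of_pos (by positivity : 0 < t*x/(1-x)),
        abs_of_pos (by positivity : 0 < t/(1-x)^2)]
    apply eq_of_log (by positivity) (by positivity)
    repeat rw [Real.log_mul (by positivity) (by positivity)]
    repeat rw [Real.log_rpow (by positivity)]
    repeat rw [Real.log_div (by positivity) (by positivity)]
    repeat rw [Real.log_pow]
    repeat rw [Real.log_mul (by positivity) (by positivity)]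
    ring
  have hint2 : ∫ s in Set.Iio 0, g s = t^(2*α-γ-1) * Beta (1-γ) (1+γ-2*α) := by
    rw [← himg2, integral_image_eq_integral_abs_deriv_smul measurableSet_Ioo hderiv2 hinj2 g,
      setIntegral_congr_fun measurableSet_Ioo hpt2, integral_const_mul]
    rfl
  have hintg2 : IntegrableOn g (Set.Iio 0) := by
    rw [← himg2, integrableOn_image_iff_integrableOn_abs_deriv_smul measurableSet_Ioo hderiv2 hinj2 g]
    refine IntegrableOn.congr_fun ?_ (fun x hx => (hpt2 x hx).symm) measurableSet_Ioo
    exact ((betaIntegrand_integrable (by linarith) (by linarith)).const_mul _)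
  -- assemble
  have hsplit : Set.Iio t = Set.Iio 0 ∪ Set.Ico 0 t := by
    rw [Set.Iio_union_Ico_eq_Iio ht.le]
  have hIco : ∫ s in Set.Ico 0 t, g s = ∫ s in Set.Ioo 0 t, g s :=
    integral_Ico_eq_integral_Ioo
  have hintgIco : IntegrableOn g (Set.Ico 0 t) :=
    hintg1.congr_set_ae (Ioo_ae_eq_Ico).symm
  calc ∫ s in Set.Iio t, g s = (∫ s in Set.Iio 0, g s) + ∫ s in Set.Ico 0 t, g s := by
        rw [hsplit]
        exact setIntegral_union (by rw [Set.disjoint_left]; intro a ha hb; exact absurd hb.1 (not_le.2 ha))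
          measurableSet_Ico hintg2 hintgIco
    _ = t^(2*α - γ - 1) * (Beta (1-γ) (2*α-1) + Beta (1-γ) (1+γ-2*α)) := by
        rw [hIco, hint1, hint2]; ring

end Main

/-- the `L²` norm computation of Lemma 3.1 in the semimartingale region:
the normalized kernel derivative `Ψ_t` has unit `L²` norm. -/
theorem stmt18 (γ α t : ℝ) (hγ0 : 0 < γ) (hγ1 : γ < 1)
    (hα1 : 1/2 < α) (hα2 : α < (1+γ)/2) (ht : 0 < t) :
    (∫ s in Set.Iio t, (t-s)^(2*(α-1)) * |s|^(-γ)) =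
      t^(2*α - γ - 1) * (Beta (1-γ) (2*α-1) + Beta (1-γ) (1+γ-2*α)) ∧
    (∫ s : ℝ,
      (if s < t then
          (α * t^((2*α-γ-1)/2) *
              (Beta (1-γ) (2*α-1) + Beta (1-γ) (1+γ-2*α)) ^ ((1:ℝ)/2))⁻¹ *
            (α * (t-s)^(α-1) * |s|^(-(γ/2)))
        else 0)^2) = 1 := by
  have hp1 := part1 hγ0 hγ1 hα1 hα2 ht
  refine ⟨hp1, ?_⟩
  have hα0 : 0 < α := by linarith
  set S := Beta (1-γ) (2*α-1) + Beta (1-γ) (1+γ-2*α) with hSdef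
  have hS : 0 < S :=
    add_pos (betaIntegrand_pos (by linarith) (by linarith))
      (betaIntegrand_pos (by linarith) (by linarith))
  set c : ℝ := α * t^((2*α-γ-1)/2) * S ^ ((1:ℝ)/2) with hcdef
  have hc : 0 < c := by
    apply mul_pos (mul_pos hα0 (rpow_pos_of_pos ht _)) (rpow_pos_of_pos hS _)
  have step1 : (∫ s : ℝ,
      (if s < t then c⁻¹ * (α * (t-s)^(α-1) * |s|^(-(γ/2))) else 0)^2)
      = ∫ s in Set.Iio t, (c⁻¹ * (α * (t-s)^(α-1) * |s|^(-(γ/2))))^2 := by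
    rw [← integral_indicator measurableSet_Iio]
    congr 1; funext s
    by_cases h : s < t <;> simp [Set.indicator, Set.mem_Iio, h]
  have step2 : ∀ s ∈ Set.Iio t,
      (c⁻¹ * (α * (t-s)^(α-1) * |s|^(-(γ/2))))^2
        = ((c^2)⁻¹ * α^2) * ((t-s)^(2*(α-1)) * |s|^(-γ)) := by
    intro s hs
    have hts : (0:ℝ) ≤ t - s := by simp only [Set.mem_Iio] at hs; linarith
    have hA : ((t-s)^(α-1))^2 = (t-s)^(2*(α-1)) := by
      rw [← Real.rpow_natCast ((t-s)^(α-1)) 2, ← Real.rpow_mul hts]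
      congr 1; push_cast; ring
    have hB : (|s|^(-(γ/2)))^2 = |s|^(-γ) := by
      rw [← Real.rpow_natCast (|s|^(-(γ/2))) 2, ← Real.rpow_mul (abs_nonneg s)]
      congr 1; push_cast; ring
    rw [← hA, ← hB]; ring
  have hc2 : c^2 = α^2 * (t^(2*α-γ-1) * S) := by
    have h1 : (t^((2*α-γ-1)/2))^2 = t^(2*α-γ-1) := by
      rw [← Real.rpow_natCast (t^((2*α-γ-1)/2)) 2, ← Real.rpow_mul ht.le]
      congr 1; push_cast; ring
    have h2 : (S^((1:ℝ)/2))^2 = S := by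
      rw [← Real.rpow_natCast (S^((1:ℝ)/2)) 2, ← Real.rpow_mul hS.le]
      norm_num
    rw [hcdef, mul_pow, mul_pow, h1, h2]; ring
  rw [step1, setIntegral_congr_fun measurableSet_Iio step2, integral_const_mul, hp1]
  rw [mul_assoc, ← hc2]
  exact inv_mul_cancel₀ (by positivity)
end

section
/- Let γ ∈ (0,1), 0 < α ≤ γ/2, and T > 0. Define f₁(u,v) := ∫₀^u (v−θ)^{α−1} (u−θ)^{α−1} θ^{−γ} dθ for 0 < u ≤ v (a Lebesgue integral of a nonnegative function, with value in (0,∞]). Then ∫₀^T ∫₀^v f₁(u,v)² du dv = +∞ (where nonnegative integrals are taken in [0,∞]). -/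
open MeasureTheory Real Set Filter

/-- Divergence of `∫₀^T v^q dv` for `q ≤ -1`. -/
lemma aux_rpow_lintegral_top (q T : ℝ) (hq : q ≤ -1) (hT : 0 < T) :
    ∫⁻ v in Set.Ioo (0:ℝ) T, ENNReal.ofReal (v ^ q) = ⊤ := by
  by_contra h
  have hmeas : Measurable fun v : ℝ => v ^ q := measurable_id.pow_const q
  have hnn : 0 ≤ᵐ[volume.restrict (Set.Ioo (0:ℝ) T)] fun v : ℝ => v ^ q := by
    filter_upwards [ae_restrict_mem measurableSet_Ioo] with v hv
    exact Real.rpow_nonneg hv.1.le q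
  have hint : IntegrableOn (fun v : ℝ => v ^ q) (Set.Ioo 0 T) := by
    refine ⟨hmeas.aestronglyMeasurable, ?_⟩
    rw [hasFiniteIntegral_iff_ofReal hnn]
    exact lt_top_iff_ne_top.2 h
  rw [intervalIntegral.integrableOn_Ioo_rpow_iff hT] at hint
  linarith

/-- for `0 < α ≤ γ/2` the kernel `f₁` fails square integrability:
`∫₀^T ∫₀^v f₁(u,v)² du dv = ∞` (necessity direction of Lemma 5.1 for positive `α`). -/
theorem stmt19 (γ α T : ℝ) (hγ0 : 0 < γ) (hγ1 : γ < 1)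
    (hα0 : 0 < α) (hα2 : α ≤ γ/2) (hT : 0 < T) :
    (∫⁻ v in Set.Ioo (0:ℝ) T, ∫⁻ u in Set.Ioo (0:ℝ) v,
      (∫⁻ θ in Set.Ioo (0:ℝ) u,
        ENNReal.ofReal ((v-θ)^(α-1) * (u-θ)^(α-1) * θ^(-γ)))^2) = ⊤ := by
  -- constant and exponent for the final lower bound
  set C : ℝ := (1/2 : ℝ) ^ (2*α) * (1/2 : ℝ) with hC
  have hCpos : 0 < C := by positivity
  set q : ℝ := 4*α - 2*γ - 1 with hq
  have hq1 : q ≤ -1 := by rw [hq]; linarith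
  rw [eq_top_iff]
  calc (⊤ : ENNReal) = ENNReal.ofReal C * ∫⁻ v in Set.Ioo (0:ℝ) T, ENNReal.ofReal (v ^ q) := by
        rw [aux_rpow_lintegral_top q T hq1 hT, ENNReal.mul_top]
        simpa using hCpos.le.lt_of_ne' (by simpa using hCpos.ne')
    _ = ∫⁻ v in Set.Ioo (0:ℝ) T, ENNReal.ofReal (C * v ^ q) := by
        rw [← lintegral_const_mul _ (by fun_prop)]
        refine lintegral_congr fun v => ?_
        rw [ENNReal.ofReal_mul hCpos.le]
    _ ≤ _ := by
        refine setLIntegral_mono' measurableSet_Ioo fun v hv => ?_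
        obtain ⟨hv0, hvT⟩ := hv
        -- Step 1: lower bound the inner u-integral by restriction to (v/2, v)
        have step_u : ENNReal.ofReal (C * v ^ q) ≤
            ∫⁻ u in Set.Ioo (v/2) v,
              (∫⁻ θ in Set.Ioo (0:ℝ) u,
                ENNReal.ofReal ((v-θ)^(α-1) * (u-θ)^(α-1) * θ^(-γ)))^2 := by
          have key : ∀ u ∈ Set.Ioo (v/2) v,
              ENNReal.ofReal (v ^ (2*(α-1-γ)) * (v/2) ^ (2*α)) ≤
              (∫⁻ θ in Set.Ioo (0:ℝ) u,
                ENNReal.ofReal ((v-θ)^(α-1) * (u-θ)^(α-1) * θ^(-γ)))^2 := by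
            intro u hu
            obtain ⟨hu1, hu2⟩ := hu
            have hu0 : 0 < u := lt_trans (by positivity) hu1
            -- pointwise lower bound on the θ-integrand by a constant
            have hpt : ∀ θ ∈ Set.Ioo (0:ℝ) u,
                ENNReal.ofReal (v ^ (α-1-γ) * u ^ (α-1)) ≤
                ENNReal.ofReal ((v-θ)^(α-1) * (u-θ)^(α-1) * θ^(-γ)) := by
              intro θ hθ
              obtain ⟨hθ0, hθu⟩ := hθ
              apply ENNReal.ofReal_le_ofReal
              have hvθ : 0 < v - θ := by linarith
              have huθ : 0 < u - θ := by linarith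
              have h1 : v ^ (α-1) ≤ (v-θ)^(α-1) :=
                Real.rpow_le_rpow_of_nonpos hvθ (by linarith) (by linarith)
              have h2 : u ^ (α-1) ≤ (u-θ)^(α-1) :=
                Real.rpow_le_rpow_of_nonpos huθ (by linarith) (by linarith)
              have h3 : v ^ (-γ) ≤ θ ^ (-γ) :=
                Real.rpow_le_rpow_of_nonpos hθ0 (by linarith) (by linarith)
              have hsplit : v ^ (α-1-γ) = v ^ (α-1) * v ^ (-γ) := by
                rw [← Real.rpow_add hv0]; ring_nf
              rw [hsplit]
              calc v ^ (α-1) * v ^ (-γ) * u ^ (α-1)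
                  = (v ^ (α-1)) * (u ^ (α-1)) * (v ^ (-γ)) := by ring
                _ ≤ (v-θ)^(α-1) * (u-θ)^(α-1) * θ^(-γ) := by
                    apply mul_le_mul (mul_le_mul h1 h2 (Real.rpow_nonneg hu0.le _)
                      (Real.rpow_nonneg hvθ.le _)) h3 (Real.rpow_nonneg hv0.le _)
                    positivity
            -- integrate the constant over θ
            have hconst : ENNReal.ofReal (v ^ (α-1-γ) * u ^ (α-1)) * ENNReal.ofReal u ≤
                ∫⁻ θ in Set.Ioo (0:ℝ) u,
                  ENNReal.ofReal ((v-θ)^(α-1) * (u-θ)^(α-1) * θ^(-γ)) := by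
              have := setLIntegral_mono' (μ := volume) (f := fun _ => ENNReal.ofReal (v ^ (α-1-γ) * u ^ (α-1)))
                (measurableSet_Ioo (a := (0:ℝ)) (b := u)) hpt
              rwa [setLIntegral_const, Real.volume_Ioo, sub_zero] at this
            calc ENNReal.ofReal (v ^ (2*(α-1-γ)) * (v/2) ^ (2*α))
                ≤ ENNReal.ofReal ((v ^ (α-1-γ) * u ^ (α-1) * u)^2) := by
                  apply ENNReal.ofReal_le_ofReal
                  have hrw : (v ^ (α-1-γ) * u ^ (α-1) * u)^2
                      = v ^ (2*(α-1-γ)) * u ^ (2*α) := by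
                    have h1 : u ^ (α-1) * u = u ^ α := by
                      rw [← Real.rpow_add_one hu0.ne' (α-1)]; ring_nf
                    have h2 : (v ^ (α-1-γ))^2 = v ^ (2*(α-1-γ)) := by
                      rw [← Real.rpow_natCast (v ^ (α-1-γ)) 2, ← Real.rpow_mul hv0.le]
                      norm_num; ring_nf
                    have h3 : (u ^ α)^2 = u ^ (2*α) := by
                      rw [← Real.rpow_natCast (u ^ α) 2, ← Real.rpow_mul hu0.le]
                      norm_num; ring_nf
                    calc (v ^ (α-1-γ) * u ^ (α-1) * u)^2
                        = (v ^ (α-1-γ))^2 * (u ^ (α-1) * u)^2 := by ring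
                      _ = v ^ (2*(α-1-γ)) * u ^ (2*α) := by rw [h1, h2, h3]
                  rw [hrw]
                  apply mul_le_mul_of_nonneg_left _ (Real.rpow_nonneg hv0.le _)
                  exact Real.rpow_le_rpow (by positivity) hu1.le (by positivity)
              _ = (ENNReal.ofReal (v ^ (α-1-γ) * u ^ (α-1)) * ENNReal.ofReal u)^2 := by
                  rw [← ENNReal.ofReal_mul (by positivity), ← ENNReal.ofReal_pow (by positivity)]
              _ ≤ _ := pow_le_pow_left' hconst 2
          calc ENNReal.ofReal (C * v ^ q)
              = ENNReal.ofReal (v ^ (2*(α-1-γ)) * (v/2) ^ (2*α)) * ENNReal.ofReal (v - v/2) := by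
                rw [← ENNReal.ofReal_mul (by positivity)]
                congr 1
                have hd : (v/2 : ℝ) ^ (2*α) = v ^ (2*α) * (1/2 : ℝ) ^ (2*α) := by
                  rw [div_eq_mul_one_div v 2, Real.mul_rpow hv0.le (by norm_num)]
                have hvq : v ^ (2*(α-1-γ)) * v ^ (2*α) * v = v ^ q := by
                  rw [← Real.rpow_add hv0, ← Real.rpow_add_one hv0.ne', hq]; ring_nf
                have : v - v/2 = v * (1/2 : ℝ) := by ring
                rw [this, hd, hC, ← hvq]; ring
            _ = ∫⁻ _ in Set.Ioo (v/2) v,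
                  ENNReal.ofReal (v ^ (2*(α-1-γ)) * (v/2) ^ (2*α)) := by
                rw [setLIntegral_const, Real.volume_Ioo]
            _ ≤ _ := setLIntegral_mono' measurableSet_Ioo key
        refine le_trans step_u (lintegral_mono_set ?_)
        intro u hu
        exact ⟨lt_trans (by positivity) hu.1, hu.2⟩
end
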